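/- arXiv:1806.10389 — 10 statements merged into one kernel-verified Lean document; each statement's English description precedes it below -/
import Mathlib

section
/- Let G be a connected undirected graph, A a subset of vertices, and v a vertex such that v is an A-gate (i.e., there exists u ≠ v with d(u,w) = d(u,v) + d(v,w) for all w ∈ A). Then there exists an out-vertex u' for v that is adjacent to v, i.e., u' is adjacent to v and d(u',w) = d(u',v) + d(v,w) = 1 + d(v,w) for all w ∈ A. -/
open SimpleGraph

/-- `A` resolves `G`: every two distinct vertices have different distance to some `w ∈ A`. -/
def Resolves {W : Type*} (G : SimpleGraph W) (A : Set W) : Prop :=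
  ∀ u v : W, u ≠ v → ∃ w ∈ A, G.dist u w ≠ G.dist v w

/-- `u` is an out-vertex for the `A`-gate `v`. -/
def IsOutVertex {W : Type*} (G : SimpleGraph W) (A : Set W) (v u : W) : Prop :=
  u ≠ v ∧ ∀ w ∈ A, G.dist u w = G.dist u v + G.dist v w

/-- `v` is an `A`-gate in `G`. -/
def IsGate {W : Type*} (G : SimpleGraph W) (A : Set W) (v : W) : Prop :=
  ∃ u, IsOutVertex G A v u

/-- `Vc 0, …, Vc (k-1)` are exactly the vertex sets of the connected components of `G - s`. -/
def IsCompFamily {W : Type*} (G : SimpleGraph W) (s : W) {k : ℕ} (Vc : Fin k → Set W) : Prop :=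
  (∀ i, (Vc i).Nonempty) ∧
  (∀ x : W, x ≠ s ↔ ∃ i, x ∈ Vc i) ∧
  (∀ x : W, ∀ i j, x ∈ Vc i → x ∈ Vc j → i = j) ∧
  (∀ i, ∀ x ∈ Vc i, ∀ y ∈ Vc i, ∃ p : G.Walk x y, s ∉ p.support) ∧
  (∀ i j, ∀ x ∈ Vc i, ∀ y ∈ Vc j, (∃ p : G.Walk x y, s ∉ p.support) → i = j)

/-- if `v` is an `A`-gate, there is an out-vertex adjacent to `v`. -/
theorem stmt0 {V : Type*} [Fintype V] (G : SimpleGraph V) (hG : G.Connected)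
    (A : Set V) (v : V) (hgate : IsGate G A v) :
    ∃ u' : V, G.Adj u' v ∧
      (∀ w ∈ A, G.dist u' w = G.dist u' v + G.dist v w ∧ G.dist u' w = 1 + G.dist v w) := by
  obtain ⟨u, hne, hd⟩ := hgate
  -- get a geodesic walk from v to u
  obtain ⟨p, hp⟩ := hG.exists_walk_length_eq_dist v u
  have hdpos : 0 < G.dist v u := hG.pos_dist_of_ne (Ne.symm hne)
  cases p with
  | nil => simp at hdpos
  | cons h q =>
    rename_i u'
    -- u' adjacent to v, walk q : u' → u with length = dist v u - 1
    have hadj : G.Adj u' v := h.symm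
    have hq : q.length = G.dist v u - 1 := by
      simp [SimpleGraph.Walk.length_cons] at hp; omega
    have hqd : G.dist u' u ≤ G.dist v u - 1 := hq ▸ SimpleGraph.dist_le q
    have hd1 : G.dist u' v = 1 := SimpleGraph.dist_eq_one_iff_adj.mpr hadj
    refine ⟨u', hadj, fun w hw => ?_⟩
    have htri1 : G.dist u' w ≤ G.dist u' v + G.dist v w := hG.dist_triangle
    have htri2 : G.dist u w ≤ G.dist u u' + G.dist u' w := hG.dist_triangle
    have hsym : G.dist u u' = G.dist u' u := SimpleGraph.dist_comm ..
    have hsym2 : G.dist u v = G.dist v u := SimpleGraph.dist_comm ..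
    have := hd w hw
    constructor <;> omega
end

section
/- Let G be a connected graph, v ∈ V, and R a minimum v-resolving set such that v is an R-gate in G. Then there exists a vertex u such that R ∪ {u} is a non-gate-v-resolving set; consequently, the size of a minimum non-gate-v-resolving set is at most |R| + 1. -/
open SimpleGraph

/-- Key lemma: if `u` is an out-vertex for the `R`-gate `v` at minimum distance from `v`,
then `v` is not an `(R ∪ {u})`-gate. -/
lemma key_lemma {V : Type*} (G : SimpleGraph V) (hG : G.Connected) (v : V)
    (R : Set V) (hR : Resolves G R) (hv : v ∈ R) (u : V)
    (hu : IsOutVertex G R v u)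
    (humin : ∀ y, IsOutVertex G R v y → G.dist u v ≤ G.dist y v) :
    ¬ IsGate G (R ∪ {u}) v := by
  have dsym : ∀ a b : V, G.dist a b = G.dist b a := fun a b => SimpleGraph.dist_comm
  rintro ⟨x, hxv, hx⟩
  -- basic facts
  have hxu : G.dist x u = G.dist x v + G.dist v u := hx u (Or.inr rfl)
  have hxR : ∀ w ∈ R, G.dist x w = G.dist x v + G.dist v w := fun w hw => hx w (Or.inl hw)
  have hdu : 0 < G.dist u v := hG.pos_dist_of_ne hu.1
  have hdx : 0 < G.dist x v := hG.pos_dist_of_ne hxv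
  -- a geodesic from v to x; z its first vertex after v
  have hvx0 : G.dist v x ≠ 0 := by
    rw [dsym]; omega
  obtain ⟨p, hp⟩ := exists_walk_of_dist_ne_zero hvx0
  cases p with
  | nil => simp at hp; omega
  | cons hadj q =>
    rename_i z
    simp only [Walk.length_cons] at hp
    have hzx : G.dist z x ≤ q.length := dist_le q
    have hzv1 : G.dist z v = 1 := by
      rw [dist_eq_one_iff_adj]; exact hadj.symm
    have hvz1 : G.dist v z = 1 := by rw [dsym]; exact hzv1
    have hdxv : G.dist x v = q.length + 1 := by
      rw [dsym]; omega
    have hxz : G.dist x z = q.length := by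
      have h1 : G.dist x v ≤ G.dist x z + G.dist z v := hG.dist_triangle
      have h2 : G.dist x z = G.dist z x := dsym x z
      omega
    -- z is an out-vertex for R with dist z v = 1, and dist z u = dist u v + 1
    have hzu : G.dist z u = G.dist v u + 1 := by
      have h1 : G.dist x u ≤ G.dist x z + G.dist z u := hG.dist_triangle
      have h2 : G.dist z u ≤ G.dist z v + G.dist v u := hG.dist_triangle
      omega
    have hzR : ∀ w ∈ R, G.dist z w = 1 + G.dist v w := by
      intro w hw
      have h1 : G.dist z w ≤ G.dist z v + G.dist v w := hG.dist_triangle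
      have h2 : G.dist x w ≤ G.dist x z + G.dist z w := hG.dist_triangle
      have h3 := hxR w hw
      omega
    have hzout : IsOutVertex G R v z := by
      refine ⟨fun h => by simp [h, dist_self] at hzv1, fun w hw => ?_⟩
      rw [hzR w hw, hzv1]
    -- minimality forces dist u v = 1
    have hd1 : G.dist u v = 1 := le_antisymm (hzv1 ▸ humin z hzout) hdu
    -- then z and u have equal distances to all of R, yet z ≠ u
    have hzne : z ≠ u := by
      intro h
      subst h
      rw [SimpleGraph.dist_self] at hzu
      omega
    obtain ⟨w, hw, hwd⟩ := hR z u hzne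
    have := hu.2 w hw
    have := hzR w hw
    omega

/-- if `R` is a minimum `v`-resolving set and `v` is an `R`-gate, then adding a
single vertex yields a non-gate-`v`-resolving set; hence every minimum non-gate-`v`-resolving
set has size at most `|R| + 1`. -/
theorem stmt3 {V : Type*} [Fintype V] (G : SimpleGraph V) (hG : G.Connected) (v : V)
    (R : Set V) (hR : Resolves G R) (hv : v ∈ R)
    (hmin : ∀ R' : Set V, Resolves G R' → v ∈ R' → R.ncard ≤ R'.ncard)
    (hgate : IsGate G R v) :
    (∃ u : V, Resolves G (R ∪ {u}) ∧ v ∈ R ∪ {u} ∧ ¬ IsGate G (R ∪ {u}) v) ∧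
    (∀ R₃ : Set V, Resolves G R₃ → v ∈ R₃ → ¬ IsGate G R₃ v →
      (∀ R' : Set V, Resolves G R' → v ∈ R' → ¬ IsGate G R' v → R₃.ncard ≤ R'.ncard) →
      R₃.ncard ≤ R.ncard + 1) := by
  -- choose an out-vertex at minimum distance from v
  have hT : {n : ℕ | ∃ y, IsOutVertex G R v y ∧ G.dist y v = n}.Nonempty := by
    obtain ⟨y, hy⟩ := hgate
    exact ⟨G.dist y v, y, hy, rfl⟩
  obtain ⟨u, hu, hud⟩ := Nat.sInf_mem hT
  have humin : ∀ y, IsOutVertex G R v y → G.dist u v ≤ G.dist y v := by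
    intro y hy
    rw [hud]
    exact Nat.sInf_le ⟨y, hy, rfl⟩
  have hres : Resolves G (R ∪ {u}) := by
    intro a b hab
    obtain ⟨w, hw, hwd⟩ := hR a b hab
    exact ⟨w, Or.inl hw, hwd⟩
  have hng := key_lemma G hG v R hR hv u hu humin
  refine ⟨⟨u, hres, Or.inl hv, hng⟩, ?_⟩
  intro R₃ _ _ _ hmin₃
  calc R₃.ncard ≤ (R ∪ {u}).ncard := hmin₃ _ hres (Or.inl hv) hng
    _ ≤ R.ncard + 1 := by rw [Set.union_singleton]; exact Set.ncard_insert_le u R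
end

section
/- Let G be a connected graph with a separation vertex s such that deleting s yields connected components with vertex sets V₁, ..., V_k where k > 2. If R is a resolving set for G, then at most one index i ∈ {1,...,k} satisfies V_i ∩ R = ∅. -/
open SimpleGraph

/-- Each component contains a neighbour of `s`. -/
lemma exists_adj_aux {V : Type*} (G : SimpleGraph V) (s : V) {k : ℕ} (Vc : Fin k → Set V)
    (hcomp : IsCompFamily G s Vc) (i : Fin k) :
    ∀ {v t : V} (_ : G.Walk v t), t = s → v ∈ Vc i → ∃ x ∈ Vc i, G.Adj x s := by
  obtain ⟨hne, hiff, hdisj, hconn, hsep⟩ := hcomp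
  intro v t p
  induction p with
  | nil =>
    intro ht hv
    exact absurd ht ((hiff _).mpr ⟨i, hv⟩)
  | @cons v w t hadj q ih =>
    intro ht hv
    by_cases hw : w = s
    · exact ⟨v, hv, hw ▸ hadj⟩
    · obtain ⟨m, hm⟩ := (hiff w).mp hw
      have hvs : v ≠ s := (hiff v).mpr ⟨i, hv⟩
      have hmi : m = i := by
        refine hsep m i w hm v hv ⟨SimpleGraph.Walk.cons hadj.symm SimpleGraph.Walk.nil, ?_⟩
        simp only [SimpleGraph.Walk.support_cons, SimpleGraph.Walk.support_nil,
          List.mem_cons, List.mem_singleton]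
        rintro (h | h | h)
        · exact hw h.symm
        · exact hvs h.symm
        · cases h
      exact ih ht (hmi ▸ hm)

/-- If `x ∈ Vc i` and `r ∉ Vc i`, every walk from `x` to `r` passes through `s`,
hence distances add. -/
lemma dist_through {V : Type*} (G : SimpleGraph V) (hG : G.Connected) (s : V) {k : ℕ}
    (Vc : Fin k → Set V) (hcomp : IsCompFamily G s Vc) (i : Fin k) {x r : V}
    (hx : x ∈ Vc i) (hr : r ∉ Vc i) :
    G.dist x r = G.dist x s + G.dist s r := by
  classical
  obtain ⟨hne, hiff, hdisj, hconn, hsep⟩ := hcomp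
  refine le_antisymm (hG.dist_triangle) ?_
  obtain ⟨p, hp⟩ := (hG x r).exists_walk_length_eq_dist
  have hs : s ∈ p.support := by
    by_contra hns
    have hrs : r ≠ s := by
      intro h; exact hns (h ▸ p.end_mem_support)
    obtain ⟨m, hm⟩ := (hiff r).mp hrs
    exact hr ((hsep i m x hx r hm ⟨p, hns⟩) ▸ hm)
  have hspec := SimpleGraph.Walk.take_spec p hs
  calc G.dist x s + G.dist s r
      ≤ (p.takeUntil s hs).length + (p.dropUntil s hs).length :=
        Nat.add_le_add (SimpleGraph.dist_le _) (SimpleGraph.dist_le _)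
    _ = p.length := by rw [← SimpleGraph.Walk.length_append, hspec]
    _ = G.dist x r := hp

/-- with more than two components at a separation vertex, a resolving set misses
at most one component. -/
theorem stmt4 {V : Type*} [Fintype V] (G : SimpleGraph V) (hG : G.Connected)
    (s : V) (k : ℕ) (Vc : Fin k → Set V) (hcomp : IsCompFamily G s Vc) (hk : 2 < k)
    (R : Set V) (hR : Resolves G R) :
    ∀ i j : Fin k, Vc i ∩ R = ∅ → Vc j ∩ R = ∅ → i = j := by
  intro i j hi hj
  by_contra hij
  obtain ⟨hne, hiff, hdisj, hconn, hsep⟩ := hcomp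
  obtain ⟨v, hv⟩ := hne i
  obtain ⟨w, hw⟩ := hne j
  obtain ⟨x, hx, hxs⟩ := exists_adj_aux G s Vc ⟨hne, hiff, hdisj, hconn, hsep⟩ i ((hG v s).some) rfl hv
  obtain ⟨y, hy, hys⟩ := exists_adj_aux G s Vc ⟨hne, hiff, hdisj, hconn, hsep⟩ j ((hG w s).some) rfl hw
  have hxy : x ≠ y := fun h => hij (hdisj x i j hx (h ▸ hy))
  obtain ⟨r, hrR, hrd⟩ := hR x y hxy
  have hri : r ∉ Vc i := fun h => Set.eq_empty_iff_forall_notMem.mp hi r ⟨h, hrR⟩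
  have hrj : r ∉ Vc j := fun h => Set.eq_empty_iff_forall_notMem.mp hj r ⟨h, hrR⟩
  have hdx : G.dist x s = 1 := SimpleGraph.dist_eq_one_iff_adj.mpr hxs
  have hdy : G.dist y s = 1 := SimpleGraph.dist_eq_one_iff_adj.mpr hys
  apply hrd
  rw [dist_through G hG s Vc ⟨hne, hiff, hdisj, hconn, hsep⟩ i hx hri,
      dist_through G hG s Vc ⟨hne, hiff, hdisj, hconn, hsep⟩ j hy hrj, hdx, hdy]
end

section
/- Let G be a connected graph with separation vertex s and let V₁, V₂ (among possibly more components) be two components of G - s. If R is a resolving set for G with R ∩ V₁ = ∅ = R ∩ V₂, and u₁ ∈ V₁, u₂ ∈ V₂ are both adjacent to s, then no vertex of R resolves u₁ and u₂ — contradiction. Hence every resolving set intersects all but at most one component of G - s. -/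
open SimpleGraph

lemma dist_through_s5 {W : Type*} (G : SimpleGraph W) (hG : G.Connected) (s x y : W)
    (h : ∀ p : G.Walk x y, s ∈ p.support) :
    G.dist x y = G.dist x s + G.dist s y := by
  classical
  refine le_antisymm (hG.dist_triangle) ?_
  obtain ⟨p, hp⟩ := (hG x y).exists_walk_length_eq_dist
  have hs := h p
  have h1 : G.dist x s ≤ (p.takeUntil s hs).length := G.dist_le _
  have h2 : G.dist s y ≤ (p.dropUntil s hs).length := G.dist_le _
  have := p.take_spec hs
  have hlen : (p.takeUntil s hs).length + (p.dropUntil s hs).length = p.length := by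
    rw [← SimpleGraph.Walk.length_append, this]
  omega

/-- if a resolving set misses two distinct components of `G - s`, then vertices of
those components adjacent to `s` cannot be resolved — a contradiction. -/
theorem stmt5 {V : Type*} [Fintype V] (G : SimpleGraph V) (hG : G.Connected)
    (s : V) (k : ℕ) (Vc : Fin k → Set V) (hcomp : IsCompFamily G s Vc)
    (R : Set V) (hR : Resolves G R)
    (i j : Fin k) (hij : i ≠ j) (hRi : R ∩ Vc i = ∅) (hRj : R ∩ Vc j = ∅)
    (u₁ u₂ : V) (hu₁ : u₁ ∈ Vc i) (hu₂ : u₂ ∈ Vc j)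
    (ha₁ : G.Adj u₁ s) (ha₂ : G.Adj u₂ s) :
    (∀ r ∈ R, G.dist u₁ r = G.dist u₂ r) ∧ False := by
  obtain ⟨hne, hmem, huniq, hconn, hsep⟩ := hcomp
  have hu12 : u₁ ≠ u₂ := fun h => hij (huniq u₁ i j hu₁ (h ▸ hu₂))
  have d1 : G.dist u₁ s = 1 := (SimpleGraph.dist_eq_one_iff_adj).mpr ha₁
  have d2 : G.dist u₂ s = 1 := (SimpleGraph.dist_eq_one_iff_adj).mpr ha₂
  have key : ∀ r ∈ R, G.dist u₁ r = G.dist u₂ r := by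
    intro r hr
    by_cases hrs : r = s
    · subst hrs; rw [d1, d2]
    · obtain ⟨m, hm⟩ := (hmem r).mp hrs
      have hmi : m ≠ i := fun h => Set.eq_empty_iff_forall_notMem.mp hRi r ⟨hr, h ▸ hm⟩
      have hmj : m ≠ j := fun h => Set.eq_empty_iff_forall_notMem.mp hRj r ⟨hr, h ▸ hm⟩
      have t1 : G.dist u₁ r = G.dist u₁ s + G.dist s r := by
        apply dist_through_s5 G hG
        intro p
        by_contra hs
        exact hmi (hsep m i r hm u₁ hu₁ ⟨p.reverse, by simpa using hs⟩)
      have t2 : G.dist u₂ r = G.dist u₂ s + G.dist s r := by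
        apply dist_through_s5 G hG
        intro p
        by_contra hs
        exact hmj (hsep m j r hm u₂ hu₂ ⟨p.reverse, by simpa using hs⟩)
      rw [t1, t2, d1, d2]
  refine ⟨key, ?_⟩
  obtain ⟨w, hw, hne'⟩ := hR u₁ u₂ hu12
  exact hne' (key w hw)
end

section
/- Let G be a connected graph with separation vertex s, components V₁,...,V_k of G - s (k ≥ 2, with the hypothesis that for k = 2 every resolving set meets both components). If A is a minimum resolving set for G, then A ∪ {s} is a minimum s-resolving set for G (a smallest resolving set containing s). -/
open SimpleGraph

/-- if `A` is a minimum resolving set, then `A ∪ {s}` is a minimum `s`-resolving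
set. -/
theorem stmt7 {V : Type*} [Fintype V] (G : SimpleGraph V) (hG : G.Connected)
    (s : V) (k : ℕ) (Vc : Fin k → Set V) (hcomp : IsCompFamily G s Vc) (hk : 2 ≤ k)
    (hk2 : k = 2 → ∀ R : Set V, Resolves G R → ∀ i : Fin k, (R ∩ Vc i).Nonempty)
    (A : Set V) (hA : Resolves G A) (hmin : ∀ R : Set V, Resolves G R → A.ncard ≤ R.ncard) :
    Resolves G (A ∪ {s}) ∧ s ∈ A ∪ {s} ∧
      ∀ R : Set V, Resolves G R → s ∈ R → (A ∪ {s}).ncard ≤ R.ncard := by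
  classical
  obtain ⟨hne, hmem, hdisj, hconn', hsep⟩ := hcomp
  have hsnot : ∀ i, s ∉ Vc i := fun i hi => ((hmem s).mpr ⟨i, hi⟩) rfl
  -- distances split at the cut vertex
  have hsplit : ∀ (x y : V) (a m : Fin k), x ∈ Vc a → y ∈ Vc m → a ≠ m →
      G.dist x y = G.dist x s + G.dist s y := by
    intro x y a m hx hy ham
    refine le_antisymm hG.dist_triangle ?_
    obtain ⟨p, hp⟩ := hG.exists_walk_length_eq_dist x y
    have hs : s ∈ p.support := by
      by_contra hns
      exact ham (hsep a m x hx y hy ⟨p, hns⟩)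
    calc G.dist x s + G.dist s y
        ≤ (p.takeUntil s hs).length + (p.dropUntil s hs).length :=
          Nat.add_le_add (dist_le _) (dist_le _)
      _ = p.length := by rw [← Walk.length_append, Walk.take_spec]
      _ = G.dist x y := hp
  -- s has a neighbour in every component
  have hnbr0 : ∀ (y t : V) (q : G.Walk y t), t = s → ∀ i : Fin k, y ∈ Vc i →
      ∃ x ∈ Vc i, G.Adj s x := by
    intro y t q
    induction q with
    | nil => intro ht i hi; exact absurd (ht ▸ hi) (hsnot i)
    | @cons y z t h q ih =>
      intro ht i hy
      by_cases hz : z = s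
      · exact ⟨y, hy, (hz ▸ h).symm⟩
      · obtain ⟨m, hm⟩ := (hmem z).mp hz
        have him : i = m := by
          refine hsep i m y hy z hm ⟨Walk.cons h Walk.nil, ?_⟩
          have hys : y ≠ s := (hmem y).mpr ⟨i, hy⟩
          simp [Walk.support_cons]
          exact ⟨fun hh => hys hh.symm, fun hh => hz hh.symm⟩
        rw [him]; exact ih ht m hm
  have hnbr : ∀ i : Fin k, ∃ x ∈ Vc i, G.Adj s x := by
    intro i
    obtain ⟨y, hy⟩ := hne i
    obtain ⟨q⟩ := hG.preconnected y s
    exact hnbr0 y s q rfl i hy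
  -- removing s from a resolving set containing s keeps it resolving
  have hremove : ∀ R : Set V, Resolves G R → s ∈ R → Resolves G (R \ {s}) := by
    intro R hR hsR
    have htwo : ∃ i j : Fin k, i ≠ j ∧ ((R \ {s}) ∩ Vc i).Nonempty ∧
        ((R \ {s}) ∩ Vc j).Nonempty := by
      rcases eq_or_lt_of_le hk with hk' | hk'
      · -- k = 2
        have hmeet : ∀ i : Fin k, ((R \ {s}) ∩ Vc i).Nonempty := by
          intro i
          obtain ⟨x, hxR, hxV⟩ := hk2 hk'.symm R hR i
          exact ⟨x, ⟨hxR, fun h => hsnot i (h ▸ hxV)⟩, hxV⟩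
        exact ⟨⟨0, by omega⟩, ⟨1, by omega⟩, by simp [Fin.ext_iff], hmeet _, hmeet _⟩
      · -- 3 ≤ k : a resolving set misses at most one component
        by_contra hcon
        push_neg at hcon
        have hmiss : ∃ i j : Fin k, i ≠ j ∧ (R \ {s}) ∩ Vc i = ∅ ∧
            (R \ {s}) ∩ Vc j = ∅ := by
          by_cases hex : ∃ i0, ((R \ {s}) ∩ Vc i0).Nonempty
          · obtain ⟨i0, hi0⟩ := hex
            have hnot : ∀ j, i0 ≠ j → (R \ {s}) ∩ Vc j = ∅ :=
              fun j hj => hcon i0 j hj hi0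
            have hcard : 1 < (Finset.univ.erase i0).card := by
              rw [Finset.card_erase_of_mem (Finset.mem_univ _)]
              simp only [Finset.card_univ, Fintype.card_fin]
              omega
            obtain ⟨a, ha, b, hb, hab⟩ := Finset.one_lt_card.mp hcard
            exact ⟨a, b, hab, hnot a (Ne.symm (Finset.ne_of_mem_erase ha)),
              hnot b (Ne.symm (Finset.ne_of_mem_erase hb))⟩
          · push_neg at hex
            exact ⟨⟨0, by omega⟩, ⟨1, by omega⟩, by simp [Fin.ext_iff], hex _, hex _⟩
        obtain ⟨i, j, hij, hi, hj⟩ := hmiss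
        obtain ⟨x, hxV, hxA⟩ := hnbr i
        obtain ⟨y, hyV, hyA⟩ := hnbr j
        have hxy : x ≠ y := fun h => hij (hdisj x i j hxV (h ▸ hyV))
        obtain ⟨w, hwR, hwd⟩ := hR x y hxy
        by_cases hws : w = s
        · subst hws
          have h1 : G.dist x w = 1 := dist_eq_one_iff_adj.mpr hxA.symm
          have h2 : G.dist y w = 1 := dist_eq_one_iff_adj.mpr hyA.symm
          omega
        · obtain ⟨m, hm⟩ := (hmem w).mp hws
          have hmi : i ≠ m := fun h =>
            Set.eq_empty_iff_forall_notMem.mp hi w ⟨⟨hwR, hws⟩, h ▸ hm⟩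
          have hmj : j ≠ m := fun h =>
            Set.eq_empty_iff_forall_notMem.mp hj w ⟨⟨hwR, hws⟩, h ▸ hm⟩
          have h1 := hsplit x w i m hxV hm hmi
          have h2 := hsplit y w j m hyV hm hmj
          have h3 : G.dist x s = 1 := dist_eq_one_iff_adj.mpr hxA.symm
          have h4 : G.dist y s = 1 := dist_eq_one_iff_adj.mpr hyA.symm
          omega
    obtain ⟨i, j, hij, ⟨w₁, hw₁R, hw₁i⟩, ⟨w₂, hw₂R, hw₂j⟩⟩ := htwo
    intro u v huv
    by_contra hcon
    push_neg at hcon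
    obtain ⟨w, hwR, hwd⟩ := hR u v huv
    have hws : w = s := by
      by_contra hws
      exact hwd (hcon w ⟨hwR, hws⟩)
    rw [hws] at hwd
    have half : ∀ a b : V, (∀ x ∈ R \ {s}, G.dist a x = G.dist b x) →
        G.dist a s ≤ G.dist b s := by
      intro a b hab
      by_cases has : a = s
      · rw [has, SimpleGraph.dist_self]; exact Nat.zero_le _
      obtain ⟨c, hc⟩ := (hmem a).mp has
      obtain ⟨x, hxR, m, hxm, hcm⟩ : ∃ x, x ∈ R \ {s} ∧ ∃ m, x ∈ Vc m ∧ c ≠ m := by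
        by_cases hci : c = i
        · exact ⟨w₂, hw₂R, j, hw₂j, by rw [hci]; exact hij⟩
        · exact ⟨w₁, hw₁R, i, hw₁i, hci⟩
      have h1 : G.dist a x = G.dist a s + G.dist s x := hsplit a x c m hc hxm hcm
      have h2 : G.dist b x ≤ G.dist b s + G.dist s x := hG.dist_triangle
      have h3 := hab x hxR
      omega
    have h1 := half u v hcon
    have h2 := half v u (fun x hx => (hcon x hx).symm)
    omega
  refine ⟨?_, Or.inr rfl, ?_⟩
  · intro u v huv
    obtain ⟨w, hw, hd⟩ := hA u v huv
    exact ⟨w, Or.inl hw, hd⟩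
  · intro R hR hsR
    by_cases hsA : s ∈ A
    · have hAs : A ∪ {s} = A :=
        Set.union_eq_self_of_subset_right (Set.singleton_subset_iff.mpr hsA)
      rw [hAs]
      exact hmin R hR
    · have hcard : (A ∪ {s}).ncard = A.ncard + 1 := by
        rw [Set.union_singleton, Set.ncard_insert_of_notMem hsA A.toFinite]
      have h1 := hmin _ (hremove R hR hsR)
      have h2 : (R \ {s}).ncard + 1 = R.ncard :=
        Set.ncard_diff_singleton_add_one hsR R.toFinite
      omega
end

section
/- Let G be a connected graph with separation vertex s and components V₁,...,V_k of G - s. Suppose for each i the set A_i ⊆ V_i ∪ {s} with s ∈ A_i is an s-resolving set of G_i := G[V_i ∪ {s}], and there is at most one index i such that s is an A_i-gate in G_i. Then A := (⋃_i A_i) \ {s} is a resolving set for G, provided that when k = 2 every resolving set of G meets both components (which holds since each A_i \ {s} ≠ ∅). -/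
open SimpleGraph

/-- The lift of `A ⊆ W` to the vertex type of an induced subgraph on `S`. -/
def liftSet {W : Type*} (S : Set W) (A : Set W) : Set ↥S := {x | (x : W) ∈ A}

/-- `A` is a minimum resolving set for `G`. -/
def IsMinResolving {W : Type*} (G : SimpleGraph W) (A : Set W) : Prop :=
  Resolves G A ∧ ∀ B : Set W, Resolves G B → A.ncard ≤ B.ncard

/-- `A` is a minimum `s`-resolving set for `G`. -/
def IsMinSResolving {W : Type*} (G : SimpleGraph W) (s : W) (A : Set W) : Prop :=
  Resolves G A ∧ s ∈ A ∧ ∀ B : Set W, Resolves G B → s ∈ B → A.ncard ≤ B.ncard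

/-- `A` is a minimum non-gate-`s`-resolving set for `G`. -/
def IsMinNonGateSResolving {W : Type*} (G : SimpleGraph W) (s : W) (A : Set W) : Prop :=
  Resolves G A ∧ s ∈ A ∧ ¬ IsGate G A s ∧
    ∀ B : Set W, Resolves G B → s ∈ B → ¬ IsGate G B s → A.ncard ≤ B.ncard

/-- The induced subgraph `G_i := G[V_i ∪ {s}]`. -/
def Gi {W : Type*} (G : SimpleGraph W) (s : W) (S : Set W) : SimpleGraph ↥(S ∪ {s}) :=
  G.induce (S ∪ {s})

/-- The vertex `s` as a vertex of `G_i`. -/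
def si {W : Type*} (s : W) (S : Set W) : ↥(S ∪ {s}) :=
  ⟨s, Set.mem_union_right _ rfl⟩

namespace Stmt9Aux

variable {V : Type*} [DecidableEq V] {G : SimpleGraph V}

lemma walk_to_induce {S : Set V} {x y : V} (p : G.Walk x y) :
    ∀ (hx : x ∈ S) (hy : y ∈ S), (∀ z ∈ p.support, z ∈ S) →
    ∃ q : (G.induce S).Walk ⟨x, hx⟩ ⟨y, hy⟩, q.length = p.length := by
  induction p with
  | nil => intro hx hy _; exact ⟨Walk.nil, rfl⟩
  | @cons a b c h p ih =>
    intro hx hy hs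
    have hb : b ∈ S := hs b (by rw [Walk.support_cons]; exact List.mem_cons_of_mem _ p.start_mem_support)
    obtain ⟨q, hq⟩ := ih hb hy (fun z hz => hs z (by rw [Walk.support_cons]; exact List.mem_cons_of_mem _ hz))
    exact ⟨Walk.cons (by exact h) q, congrArg (· + 1) hq⟩

variable {s : V} {k : ℕ} {Vc : Fin k → Set V}

def CF (G : SimpleGraph V) (s : V) (Vc : Fin k → Set V) : Prop :=
  (∀ i, (Vc i).Nonempty) ∧
  (∀ x : V, x ≠ s ↔ ∃ i, x ∈ Vc i) ∧
  (∀ x : V, ∀ i j, x ∈ Vc i → x ∈ Vc j → i = j) ∧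
  (∀ i, ∀ x ∈ Vc i, ∀ y ∈ Vc i, ∃ p : G.Walk x y, s ∉ p.support) ∧
  (∀ i j, ∀ x ∈ Vc i, ∀ y ∈ Vc j, (∃ p : G.Walk x y, s ∉ p.support) → i = j)

lemma S1 (hcomp : CF G s Vc) {i : Fin k} {x z : V} (hx : x ∈ Vc i) (p : G.Walk x z)
    (hp : s ∉ p.support) : ∀ w ∈ p.support, w ∈ Vc i := by
  intro w hw
  have hws : w ≠ s := fun h => hp (h ▸ hw)
  obtain ⟨l, hl⟩ := (hcomp.2.1 w).1 hws
  have : i = l := hcomp.2.2.2.2 i l x hx w hl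
    ⟨p.takeUntil w hw, fun hs' => hp (p.support_takeUntil_subset hw hs')⟩
  exact this ▸ hl

lemma S3 (hcomp : CF G s Vc) {i : Fin k} {y : V} (hy : y ∈ Vc i) (p : G.Walk s y)
    (hp : p.IsPath) : ∀ w ∈ p.support, w ∈ Vc i ∪ {s} := by
  have hsy : s ≠ y := fun h => (hcomp.2.1 s).2 ⟨i, h ▸ hy⟩ rfl
  obtain ⟨b, h, p', rfl⟩ := Walk.exists_eq_cons_of_ne hsy p
  rw [Walk.cons_isPath_iff] at hp
  obtain ⟨hp', hs'⟩ := hp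
  have hbs : b ≠ s := fun h => hs' (h ▸ p'.start_mem_support)
  obtain ⟨l, hl⟩ := (hcomp.2.1 b).1 hbs
  have hyl : y ∈ Vc l := S1 hcomp hl p' hs' y p'.end_mem_support
  have hli : l = i := hcomp.2.2.1 y l i hyl hy
  intro w hw
  rw [Walk.support_cons, List.mem_cons] at hw
  rcases hw with hw | hw
  · exact Or.inr (by simp [hw])
  · exact Or.inl (hli ▸ S1 hcomp hl p' hs' w hw)

lemma S2 (hcomp : CF G s Vc) {i : Fin k} {x y : V} (hx : x ∈ Vc i ∪ {s}) (hy : y ∈ Vc i ∪ {s})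
    (p : G.Walk x y) (hp : p.IsPath) : ∀ w ∈ p.support, w ∈ Vc i ∪ {s} := by
  by_cases hsx : x = s
  · have hsx' := hsx.symm; subst hsx'
    by_cases hsy : y = s
    · have hsy' := hsy.symm; subst hsy'
      intro w hw
      have : p = Walk.nil := congrArg Subtype.val (Path.loop_eq ⟨p, hp⟩)
      subst this
      simp at hw
      exact Or.inr (by simp [hw])
    · have hy' : y ∈ Vc i := hy.resolve_right (by simpa using hsy)
      exact S3 hcomp hy' p hp
  · have hx' : x ∈ Vc i := hx.resolve_right (by simpa using hsx)
    by_cases hsy : y = s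
    · have hsy' := hsy.symm; subst hsy'
      intro w hw
      have hw' : w ∈ p.reverse.support := by
        rw [Walk.support_reverse]; exact List.mem_reverse.mpr hw
      exact S3 hcomp hx' p.reverse hp.reverse w hw'
    · have hy' : y ∈ Vc i := hy.resolve_right (by simpa using hsy)
      by_cases hsp : s ∈ p.support
      · intro w hw
        have hsplit : w ∈ (p.takeUntil s hsp).support ∨ w ∈ (p.dropUntil s hsp).support := by
          rw [← p.take_spec hsp, Walk.support_append, List.mem_append] at hw
          exact hw.imp id (List.mem_of_mem_tail)
        rcases hsplit with hw | hw
        · have hw' : w ∈ (p.takeUntil s hsp).reverse.support := by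
            rw [Walk.support_reverse]; exact List.mem_reverse.mpr hw
          exact S3 hcomp hx' (p.takeUntil s hsp).reverse (hp.takeUntil hsp).reverse w hw'
        · exact S3 hcomp hy' (p.dropUntil s hsp) (hp.dropUntil hsp) w hw
      · intro w hw
        exact Or.inl (S1 hcomp hx' p hsp w hw)

lemma dist_transfer (hG : G.Connected) (hcomp : CF G s Vc) (i : Fin k)
    (x y : ↥(Vc i ∪ {s})) :
    (G.induce (Vc i ∪ {s})).dist x y = G.dist (x : V) (y : V) := by
  obtain ⟨x, hx⟩ := x
  obtain ⟨y, hy⟩ := y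
  obtain ⟨p, hp⟩ := hG.exists_walk_length_eq_dist x y
  have hlen : p.bypass.length = G.dist x y :=
    le_antisymm (hp ▸ p.length_bypass_le) (dist_le _)
  have hsup := S2 hcomp hx hy p.bypass p.bypass_isPath
  obtain ⟨q, hq⟩ := walk_to_induce p.bypass hx hy hsup
  refine le_antisymm (by calc (G.induce (Vc i ∪ {s})).dist ⟨x, hx⟩ ⟨y, hy⟩ ≤ q.length := dist_le q
        _ = G.dist x y := by rw [hq, hlen]) ?_
  obtain ⟨r, hr⟩ := (Walk.reachable q).exists_walk_length_eq_dist
  have hmap := dist_le (r.map (Embedding.induce (Vc i ∪ {s})).toHom)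
  rw [Walk.length_map, hr] at hmap
  exact hmap

lemma dist_cross (hG : G.Connected) (hcomp : CF G s Vc) {i j : Fin k} {x y : V}
    (hx : x ∈ Vc i) (hy : y ∈ Vc j) (hij : i ≠ j) :
    G.dist x y = G.dist x s + G.dist s y := by
  obtain ⟨p, hp⟩ := hG.exists_walk_length_eq_dist x y
  have hs : s ∈ p.support := by
    by_contra hs
    exact hij (hcomp.2.2.2.2 i j x hx y hy ⟨p, hs⟩)
  have h1 : G.dist x s ≤ (p.takeUntil s hs).length := dist_le _
  have h2 : G.dist s y ≤ (p.dropUntil s hs).length := dist_le _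
  have h3 : (p.takeUntil s hs).length + (p.dropUntil s hs).length = p.length := by
    rw [← Walk.length_append, p.take_spec hs]
  have h4 := hG.dist_triangle (u := x) (v := s) (w := y)
  omega

end Stmt9Aux

/-- if each `A_i` is an `s`-resolving set for `G_i` and `s` is an `A_i`-gate for at
most one index, then `(⋃ i, A_i) \ {s}` is a resolving set for `G`. -/


theorem stmt9 {V : Type*} [Fintype V] (G : SimpleGraph V) (hG : G.Connected)
    (s : V) (k : ℕ) (Vc : Fin k → Set V) (hcomp : IsCompFamily G s Vc) (hk : 2 ≤ k)
    (hk2 : k = 2 → ∀ R : Set V, Resolves G R → ∀ i : Fin k, (R ∩ Vc i).Nonempty)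
    (Ai : Fin k → Set V)
    (hsub : ∀ i, Ai i ⊆ Vc i ∪ {s}) (hsmem : ∀ i, s ∈ Ai i)
    (hres : ∀ i, Resolves (Gi G s (Vc i)) (liftSet (Vc i ∪ {s}) (Ai i)))
    (hgate : ∀ i j : Fin k,
      IsGate (Gi G s (Vc i)) (liftSet (Vc i ∪ {s}) (Ai i)) (si s (Vc i)) →
      IsGate (Gi G s (Vc j)) (liftSet (Vc j ∪ {s}) (Ai j)) (si s (Vc j)) → i = j) :
    Resolves G ((⋃ i, Ai i) \ {s}) := by
  classical
  have hcomp' : Stmt9Aux.CF G s Vc := hcomp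
  have hiff := hcomp.2.1
  have huniq := hcomp.2.2.1
  set A := (⋃ i, Ai i) \ {s} with hAdef
  have hne_s : ∀ i, ∀ x ∈ Vc i, x ≠ s := fun i x hx => (hiff x).2 ⟨i, hx⟩
  have hAmem : ∀ (l : Fin k) (w : V), w ∈ Ai l → w ≠ s → w ∈ A := fun l w h hn =>
    ⟨Set.mem_iUnion.mpr ⟨l, h⟩, hn⟩
  have htrans : ∀ (i : Fin k) (x y : ↥(Vc i ∪ {s})),
      (Gi G s (Vc i)).dist x y = G.dist (x : V) (y : V) :=
    fun i x y => Stmt9Aux.dist_transfer hG hcomp' i x y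
  have hsiv : ∀ i : Fin k, ((si s (Vc i)) : V) = s := fun i => rfl
  have RES : ∀ (i : Fin k), ∀ x ∈ Vc i ∪ {s}, ∀ y ∈ Vc i ∪ {s}, x ≠ y →
      ∃ w ∈ Ai i, w ∈ Vc i ∪ {s} ∧ G.dist x w ≠ G.dist y w := by
    intro i x hx y hy hxy
    obtain ⟨w, hwA, hwd⟩ := hres i ⟨x, hx⟩ ⟨y, hy⟩ (fun h => hxy (congrArg Subtype.val h))
    rw [htrans i, htrans i] at hwd
    exact ⟨(w : V), hwA, w.2, hwd⟩
  have GATE1 : ∀ i : Fin k, Ai i ⊆ {s} →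
      IsGate (Gi G s (Vc i)) (liftSet (Vc i ∪ {s}) (Ai i)) (si s (Vc i)) := by
    intro i hAi
    obtain ⟨u, hu⟩ := hcomp.1 i
    refine ⟨⟨u, Set.mem_union_left _ hu⟩, fun h => hne_s i u hu (congrArg Subtype.val h), ?_⟩
    intro w hw
    have hws : w = si s (Vc i) := Subtype.ext (hAi hw)
    rw [hws, SimpleGraph.dist_self, add_zero]
  have NG : ∀ i : Fin k,
      ¬ IsGate (Gi G s (Vc i)) (liftSet (Vc i ∪ {s}) (Ai i)) (si s (Vc i)) →
      ∀ u ∈ Vc i, ∃ w ∈ Ai i, w ∈ Vc i ∧ G.dist u w ≠ G.dist u s + G.dist s w := by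
    intro i hg u hu
    have h2 : ¬ ∀ w ∈ liftSet (Vc i ∪ {s}) (Ai i),
        (Gi G s (Vc i)).dist ⟨u, Set.mem_union_left _ hu⟩ w =
        (Gi G s (Vc i)).dist ⟨u, Set.mem_union_left _ hu⟩ (si s (Vc i)) +
        (Gi G s (Vc i)).dist (si s (Vc i)) w :=
      fun h => hg ⟨⟨u, Set.mem_union_left _ hu⟩,
        fun h' => hne_s i u hu (congrArg Subtype.val h'), h⟩
    push_neg at h2
    obtain ⟨w, hwA, hwd⟩ := h2
    rw [htrans i, htrans i, htrans i, hsiv i] at hwd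
    have hws : (w : V) ≠ s := by
      intro h
      apply hwd
      rw [show ((w : V)) = s from h, SimpleGraph.dist_self, add_zero]
    refine ⟨(w : V), hwA, ?_, hwd⟩
    rcases w.2 with h | h
    · exact h
    · exact absurd h hws
  have CROSS : ∀ (i j : Fin k), i ≠ j → ∀ x ∈ Vc i, ∀ y ∈ Vc j,
      G.dist x y = G.dist x s + G.dist s y :=
    fun i j hij x hx y hy => Stmt9Aux.dist_cross hG hcomp' hx hy hij
  have CROSS' : ∀ (i j : Fin k), i ≠ j → ∀ u ∈ Vc i ∪ {s}, ∀ a ∈ Vc j,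
      G.dist u a = G.dist u s + G.dist s a := by
    intro i j hij u hu a ha
    rcases hu with hu | hu
    · exact CROSS i j hij u hu a ha
    · rw [show u = s from hu, SimpleGraph.dist_self, zero_add]
  have KK2 : k = 2 → ∀ p q : Fin k, p ≠ q → Ai p ⊆ {s} → False := by
    intro hk' p q hpq hp
    have gp := GATE1 p hp
    have hgq : ¬ IsGate (Gi G s (Vc q)) (liftSet (Vc q ∪ {s}) (Ai q)) (si s (Vc q)) :=
      fun hq => hpq (hgate p q gp hq)
    have hinj : ∀ x ∈ Vc p ∪ {s}, ∀ y ∈ Vc p ∪ {s}, x ≠ y → G.dist x s ≠ G.dist y s := by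
      intro x hx y hy hxy
      obtain ⟨w, hwA, hwS, hd⟩ := RES p x hx y hy hxy
      rwa [show w = s from hp hwA] at hd
    have classify : ∀ x : V, x = s ∨ x ∈ Vc p ∨ x ∈ Vc q := by
      intro x
      by_cases hxs : x = s
      · exact Or.inl hxs
      · obtain ⟨l, hl⟩ := (hiff x).1 hxs
        rcases eq_or_ne l p with rfl | hlp
        · exact Or.inr (Or.inl hl)
        rcases eq_or_ne l q with rfl | hlq
        · exact Or.inr (Or.inr hl)
        exfalso
        have h1 : (l : ℕ) ≠ (p : ℕ) := fun h => hlp (Fin.ext h)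
        have h2 : (l : ℕ) ≠ (q : ℕ) := fun h => hlq (Fin.ext h)
        have h3 : (p : ℕ) ≠ (q : ℕ) := fun h => hpq (Fin.ext h)
        have hl1 := l.isLt
        have hp1 := p.isLt
        have hq1 := q.isLt
        omega
    have helper : ∀ x ∈ Vc p, ∀ y ∈ Vc q, ∃ w ∈ Ai q, G.dist x w ≠ G.dist y w := by
      intro x hx y hy
      by_cases hds : G.dist x s = G.dist y s
      · obtain ⟨w, hwA, hwV, hwd⟩ := NG q hgq y hy
        refine ⟨w, hwA, ?_⟩
        rw [CROSS p q hpq x hx w hwV, hds]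
        exact fun h => hwd h.symm
      · exact ⟨s, hsmem q, hds⟩
    have hR : Resolves G (Ai q) := by
      intro x y hxy
      rcases classify x with hx | hx | hx <;> rcases classify y with hy | hy | hy
      · exact absurd (hx.trans hy.symm) hxy
      · exact ⟨s, hsmem q, hinj x (Or.inr hx) y (Or.inl hy) hxy⟩
      · obtain ⟨w, hwA, _, hd⟩ := RES q x (Or.inr hx) y (Or.inl hy) hxy
        exact ⟨w, hwA, hd⟩
      · exact ⟨s, hsmem q, hinj x (Or.inl hx) y (Or.inr hy) hxy⟩
      · exact ⟨s, hsmem q, hinj x (Or.inl hx) y (Or.inl hy) hxy⟩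
      · exact helper x hx y hy
      · obtain ⟨w, hwA, _, hd⟩ := RES q x (Or.inl hx) y (Or.inr hy) hxy
        exact ⟨w, hwA, hd⟩
      · obtain ⟨w, h1, h2⟩ := helper y hy x hx
        exact ⟨w, h1, h2.symm⟩
      · obtain ⟨w, hwA, _, hd⟩ := RES q x (Or.inl hx) y (Or.inl hy) hxy
        exact ⟨w, hwA, hd⟩
    obtain ⟨a, haA, haV⟩ := hk2 hk' (Ai q) hR p
    rcases hsub q haA with h | h
    · exact hpq (huniq a p q haV h)
    · exact hne_s p a haV h
  have NONDEG : ∀ i : Fin k, ∃ j, j ≠ i ∧ ∃ a ∈ Ai j, a ∈ Vc j := by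
    intro i
    by_contra hc
    push_neg at hc
    have hdeg : ∀ j, j ≠ i → Ai j ⊆ {s} := by
      intro j hj a ha
      rcases hsub j ha with h | h
      · exact absurd h (hc j hj a ha)
      · exact h
    rcases eq_or_lt_of_le hk with hk' | hk'
    · have hiv := i.isLt
      have hj1 : (if (i : ℕ) = 0 then 1 else 0) < k := by split <;> omega
      have hji : (⟨if (i : ℕ) = 0 then 1 else 0, hj1⟩ : Fin k) ≠ i := by
        intro h
        have h2 : (if (i : ℕ) = 0 then 1 else 0) = (i : ℕ) := congrArg Fin.val h
        split at h2 <;> omega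
      exact KK2 hk'.symm _ i hji (hdeg _ hji)
    · have h3 : 3 ≤ k := hk'
      have hex : ∃ a b : Fin k, a ≠ i ∧ b ≠ i ∧ a ≠ b := by
        rcases (show (i : ℕ) = 0 ∨ (i : ℕ) = 1 ∨ 2 ≤ (i : ℕ) by omega) with h | h | h
        · exact ⟨⟨1, by omega⟩, ⟨2, by omega⟩,
            fun he => by have h' : (1 : ℕ) = (i : ℕ) := congrArg Fin.val he; omega,
            fun he => by have h' : (2 : ℕ) = (i : ℕ) := congrArg Fin.val he; omega,
            fun he => by have h' : (1 : ℕ) = (2 : ℕ) := congrArg Fin.val he; omega⟩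
        · exact ⟨⟨0, by omega⟩, ⟨2, by omega⟩,
            fun he => by have h' : (0 : ℕ) = (i : ℕ) := congrArg Fin.val he; omega,
            fun he => by have h' : (2 : ℕ) = (i : ℕ) := congrArg Fin.val he; omega,
            fun he => by have h' : (0 : ℕ) = (2 : ℕ) := congrArg Fin.val he; omega⟩
        · exact ⟨⟨0, by omega⟩, ⟨1, by omega⟩,
            fun he => by have h' : (0 : ℕ) = (i : ℕ) := congrArg Fin.val he; omega,
            fun he => by have h' : (1 : ℕ) = (i : ℕ) := congrArg Fin.val he; omega,
            fun he => by have h' : (0 : ℕ) = (1 : ℕ) := congrArg Fin.val he; omega⟩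
      obtain ⟨a, b, hai, hbi, hab⟩ := hex
      exact hab (hgate a b (GATE1 a (hdeg a hai)) (GATE1 b (hdeg b hbi)))
  have caseA : ∀ i : Fin k, ∀ x ∈ Vc i ∪ {s}, ∀ y ∈ Vc i ∪ {s}, x ≠ y →
      ∃ w ∈ A, G.dist x w ≠ G.dist y w := by
    intro i x hx y hy hxy
    obtain ⟨w, hwA, hwS, hwd⟩ := RES i x hx y hy hxy
    by_cases hws : w = s
    · rw [hws] at hwd
      obtain ⟨j, hji, a, haA, haV⟩ := NONDEG i
      refine ⟨a, hAmem j a haA (hne_s j a haV), ?_⟩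
      rw [CROSS' i j hji.symm x hx a haV, CROSS' i j hji.symm y hy a haV]
      exact fun h => hwd (by omega)
    · exact ⟨w, hAmem i w hwA hws, hwd⟩
  have caseBdeg : ∀ i j : Fin k, i ≠ j → ∀ x ∈ Vc i, ∀ y ∈ Vc j, Ai i ⊆ {s} →
      (∀ w ∈ A, G.dist x w = G.dist y w) → False := by
    intro i j hij x hx y hy hdeg hall
    rcases eq_or_lt_of_le hk with hk' | hk'
    · exact KK2 hk'.symm i j hij hdeg
    · have gi := GATE1 i hdeg
      have hgj : ¬ IsGate (Gi G s (Vc j)) (liftSet (Vc j ∪ {s}) (Ai j)) (si s (Vc j)) :=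
        fun g => hij (hgate i j gi g)
      obtain ⟨w, hwA, hwV, hwd⟩ := NG j hgj y hy
      obtain ⟨l, hli, hlj⟩ : ∃ l : Fin k, l ≠ i ∧ l ≠ j := by
        by_contra hcon
        push_neg at hcon
        have hsubu : (Finset.univ : Finset (Fin k)) ⊆ {i, j} := by
          intro l _
          rcases eq_or_ne l i with rfl | h
          · simp
          · simp [hcon l h]
        have hcard := Finset.card_le_card hsubu
        rw [Finset.card_univ, Fintype.card_fin] at hcard
        have h2 : ({i, j} : Finset (Fin k)).card ≤ 2 := by
          apply le_trans (Finset.card_insert_le _ _)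
          simp
        omega
      have hAl : ¬ Ai l ⊆ {s} := fun h => hli (hgate l i (GATE1 l h) gi)
      obtain ⟨a, haA, haV⟩ : ∃ a ∈ Ai l, a ∈ Vc l := by
        by_contra hcon
        push_neg at hcon
        exact hAl (fun a ha => (hsub l ha).resolve_left (hcon a ha))
      have e1 : G.dist x a = G.dist x s + G.dist s a := CROSS i l (Ne.symm hli) x hx a haV
      have e2 : G.dist y a = G.dist y s + G.dist s a := CROSS j l (Ne.symm hlj) y hy a haV
      have h1 := hall a (hAmem l a haA (hne_s l a haV))
      have e3 : G.dist x w = G.dist x s + G.dist s w := CROSS i j hij x hx w hwV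
      have h2 := hall w (hAmem j w hwA (hne_s j w hwV))
      apply hwd
      omega
  intro u v huv
  by_cases hus : u = s
  · have hvs : v ≠ s := fun h => huv (by rw [hus, h])
    obtain ⟨j, hv⟩ := (hiff v).1 hvs
    exact caseA j u (Or.inr hus) v (Or.inl hv) huv
  by_cases hvs : v = s
  · obtain ⟨i, hu⟩ := (hiff u).1 hus
    exact caseA i u (Or.inl hu) v (Or.inr hvs) huv
  obtain ⟨i, hu⟩ := (hiff u).1 hus
  obtain ⟨j, hv⟩ := (hiff v).1 hvs
  rcases eq_or_ne i j with rfl | hij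
  · exact caseA i u (Or.inl hu) v (Or.inl hv) huv
  by_contra hcon
  push_neg at hcon
  by_cases hdi : Ai i ⊆ {s}
  · exact caseBdeg i j hij u hu v hv hdi hcon
  by_cases hdj : Ai j ⊆ {s}
  · exact caseBdeg j i hij.symm v hv u hu hdj (fun w hw => (hcon w hw).symm)
  obtain ⟨a, haA, haV⟩ : ∃ a ∈ Ai i, a ∈ Vc i := by
    by_contra hcon2
    push_neg at hcon2
    exact hdi (fun a ha => (hsub i ha).resolve_left (hcon2 a ha))
  obtain ⟨b, hbA, hbV⟩ : ∃ b ∈ Ai j, b ∈ Vc j := by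
    by_contra hcon2
    push_neg at hcon2
    exact hdj (fun b hb => (hsub j hb).resolve_left (hcon2 b hb))
  have t1 : G.dist u a ≤ G.dist u s + G.dist s a := hG.dist_triangle
  have e1 : G.dist v a = G.dist v s + G.dist s a := CROSS j i hij.symm v hv a haV
  have h1 := hcon a (hAmem i a haA (hne_s i a haV))
  have t2 : G.dist v b ≤ G.dist v s + G.dist s b := hG.dist_triangle
  have e2 : G.dist u b = G.dist u s + G.dist s b := CROSS i j hij u hu b hbV
  have h2 := hcon b (hAmem j b hbA (hne_s j b hbV))
  have hds : G.dist u s = G.dist v s := by omega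
  have gi : IsGate (Gi G s (Vc i)) (liftSet (Vc i ∪ {s}) (Ai i)) (si s (Vc i)) := by
    refine ⟨⟨u, Set.mem_union_left _ hu⟩, fun h => hne_s i u hu (congrArg Subtype.val h), ?_⟩
    intro w hw
    rw [htrans i, htrans i, htrans i]
    show G.dist u (w : V) = G.dist u s + G.dist s (w : V)
    rcases w.2 with hwV | hwV
    · have hthis := hcon (w : V) (hAmem i w hw (hne_s i _ hwV))
      rw [hthis, CROSS j i hij.symm v hv (w : V) hwV, hds]
    · rw [show ((w : V)) = s from hwV, SimpleGraph.dist_self, add_zero]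
  have gj : IsGate (Gi G s (Vc j)) (liftSet (Vc j ∪ {s}) (Ai j)) (si s (Vc j)) := by
    refine ⟨⟨v, Set.mem_union_left _ hv⟩, fun h => hne_s j v hv (congrArg Subtype.val h), ?_⟩
    intro w hw
    rw [htrans j, htrans j, htrans j]
    show G.dist v (w : V) = G.dist v s + G.dist s (w : V)
    rcases w.2 with hwV | hwV
    · have hthis := hcon (w : V) (hAmem j w hw (hne_s j _ hwV))
      rw [← hthis, CROSS i j hij u hu (w : V) hwV, hds]
    · rw [show ((w : V)) = s from hwV, SimpleGraph.dist_self, add_zero]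
  exact hij (hgate i j gi gj)
end

section
/- Let G be a connected graph with separation vertex s and components V₁,...,V_k of G - s (k ≥ 2). If A is a resolving set of G, then for each i the set A_i := (A ∩ V_i) ∪ {s} is a resolving set of the induced subgraph G_i on V_i ∪ {s}. -/
open SimpleGraph

section Aux
variable {V : Type*} {G : SimpleGraph V} {s : V} {k : ℕ} {Vc : Fin k → Set V}

/-- s is in no component. -/
lemma s_not_mem (hcomp : IsCompFamily G s Vc) {i : Fin k} : s ∉ Vc i := by
  intro h
  exact absurd rfl ((hcomp.2.1 s).mpr ⟨i, h⟩)

/-- a vertex in a component is not s -/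
lemma mem_ne_s (hcomp : IsCompFamily G s Vc) {i : Fin k} {x : V} (hx : x ∈ Vc i) : x ≠ s :=
  (hcomp.2.1 x).mpr ⟨i, hx⟩

/-- edges out of a component go to s or stay. -/
lemma adj_mem (hcomp : IsCompFamily G s Vc) {i : Fin k} {x y : V}
    (hx : x ∈ Vc i) (hxy : G.Adj x y) : y = s ∨ y ∈ Vc i := by
  by_cases hy : y = s
  · exact Or.inl hy
  · obtain ⟨j, hj⟩ := (hcomp.2.1 y).mp hy
    right
    have hwalk : ∃ p : G.Walk x y, s ∉ p.support := by
      refine ⟨Walk.cons hxy Walk.nil, ?_⟩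
      simp [Walk.support_cons]
      exact ⟨fun h => mem_ne_s hcomp hx h.symm, fun h => hy h.symm⟩
    have := hcomp.2.2.2.2 i j x hx y hj hwalk
    rwa [this]

/-- Lemma C: a walk from a component vertex avoiding s stays in the component. -/
lemma walk_support_mem (hcomp : IsCompFamily G s Vc) {i : Fin k} :
    ∀ {x y : V} (p : G.Walk x y), x ∈ Vc i → s ∉ p.support →
      ∀ z ∈ p.support, z ∈ Vc i := by
  intro x y p
  induction p with
  | nil => intro hx _ z hz; simp at hz; rwa [hz]
  | @cons a b c hab q ih =>
    intro ha hs z hz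
    have hbs : b ≠ s := fun h => hs (by
      rw [Walk.support_cons]
      exact List.mem_cons_of_mem _ (h ▸ q.start_mem_support))
    have hb : b ∈ Vc i := (adj_mem hcomp ha hab).resolve_left hbs
    rw [Walk.support_cons] at hz hs
    rcases List.mem_cons.mp hz with h | h
    · rwa [h]
    · exact ih hb (fun hc => hs (List.mem_cons_of_mem _ hc)) z h

/-- Lemma E: the support of a path between vertices of `Vc i ∪ {s}` stays in `Vc i ∪ {s}`. -/
lemma path_support_mem (hcomp : IsCompFamily G s Vc) {i : Fin k} :
    ∀ {x y : V} (p : G.Walk x y), p.IsPath → x ∈ Vc i ∪ {s} → y ∈ Vc i ∪ {s} →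
      ∀ z ∈ p.support, z ∈ Vc i ∪ {s} := by
  intro x y p
  induction p with
  | nil => intro _ hx _ z hz; simp at hz; rwa [hz]
  | @cons a b c hab q ih =>
    intro hp ha hc z hz
    rw [Walk.support_cons] at hz
    rcases List.mem_cons.mp hz with h | h
    · rwa [h]
    rcases ha with ha | ha
    · -- a ∈ Vc i
      rcases adj_mem hcomp ha hab with hb | hb
      · exact ih (((Walk.cons_isPath_iff _ _).mp hp).1) (Or.inr (by simp [hb])) hc z h
      · exact ih (((Walk.cons_isPath_iff _ _).mp hp).1) (Or.inl hb) hc z h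
    · -- a = s
      simp only [Set.mem_singleton_iff] at ha
      have hbs : b ≠ s := by
        intro hh
        have h2 := hab
        rw [ha, hh] at h2
        exact G.irrefl h2
      obtain ⟨j, hj⟩ := (hcomp.2.1 b).mp hbs
      rw [Walk.cons_isPath_iff _ _] at hp
      have hsq : s ∉ q.support := ha ▸ hp.2
      have hall := walk_support_mem hcomp q hj hsq
      have hcj : c ∈ Vc j := hall c q.end_mem_support
      have : j = i := by
        rcases hc with hc | hc
        · exact hcomp.2.2.1 c j i hcj hc
        · exact absurd hc (mem_ne_s hcomp hcj)
      exact Or.inl (this ▸ hall z h)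

/-- Lift a walk with support in S to the induced graph. -/
lemma lift_walk {S : Set V} :
    ∀ {x y : V} (p : G.Walk x y) (hx : x ∈ S) (hy : y ∈ S),
      (∀ z ∈ p.support, z ∈ S) →
      ∃ q : (G.induce S).Walk ⟨x, hx⟩ ⟨y, hy⟩, q.length = p.length := by
  intro x y p
  induction p with
  | nil => intro hx _ _; exact ⟨Walk.nil, rfl⟩
  | @cons a b c hab q ih =>
    intro ha hc hall
    have hb : b ∈ S := hall b (by simp [Walk.support_cons, Walk.start_mem_support])
    obtain ⟨q', hq'⟩ := ih hb hc (fun z hz => hall z (by rw [Walk.support_cons]; exact List.mem_cons_of_mem _ hz))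
    exact ⟨Walk.cons (by simpa using hab) q', by simp [hq']⟩

/-- distances agree between G and Gi on Vc i ∪ {s}. -/
lemma dist_eq (hG : G.Connected) (hcomp : IsCompFamily G s Vc) {i : Fin k}
    {x y : V} (hx : x ∈ Vc i ∪ {s}) (hy : y ∈ Vc i ∪ {s}) :
    (Gi G s (Vc i)).dist ⟨x, hx⟩ ⟨y, hy⟩ = G.dist x y := by
  haveI := Classical.decEq V
  obtain ⟨p, hp⟩ := (hG x y).exists_walk_length_eq_dist
  have hbp := path_support_mem hcomp p.bypass p.bypass_isPath hx hy
  obtain ⟨q, hq⟩ := lift_walk p.bypass hx hy hbp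
  apply le_antisymm
  · calc (Gi G s (Vc i)).dist ⟨x, hx⟩ ⟨y, hy⟩ ≤ q.length := SimpleGraph.dist_le q
    _ = p.bypass.length := hq
    _ ≤ p.length := p.length_bypass_le
    _ = G.dist x y := hp
  · have hreach : (Gi G s (Vc i)).Reachable ⟨x, hx⟩ ⟨y, hy⟩ := ⟨q⟩
    obtain ⟨r, hr⟩ := hreach.exists_walk_length_eq_dist
    calc G.dist x y ≤ (r.map (SimpleGraph.Embedding.induce _).toHom).length :=
        SimpleGraph.dist_le _
    _ = r.length := Walk.length_map _ _
    _ = _ := hr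

/-- Lemma D: additivity through s. -/
lemma dist_add (hG : G.Connected) (hcomp : IsCompFamily G s Vc) {i : Fin k}
    {x w : V} (hx : x ∈ Vc i) (hw1 : w ∉ Vc i) (hw2 : w ≠ s) :
    G.dist x w = G.dist x s + G.dist s w := by
  haveI := Classical.decEq V
  apply le_antisymm (hG.dist_triangle)
  obtain ⟨p, hp⟩ := (hG x w).exists_walk_length_eq_dist
  have hs : s ∈ p.support := by
    by_contra hs
    exact hw1 (walk_support_mem hcomp p hx hs w p.end_mem_support)
  calc G.dist x s + G.dist s w
      ≤ (p.takeUntil s hs).length + (p.dropUntil s hs).length :=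
        Nat.add_le_add (SimpleGraph.dist_le _) (SimpleGraph.dist_le _)
    _ = p.length := by rw [← Walk.length_append, Walk.take_spec]
    _ = G.dist x w := hp
end Aux


/-- if `A` resolves `G`, then each `A_i := (A ∩ V_i) ∪ {s}` resolves `G_i`. -/
theorem stmt10 {V : Type*} [Fintype V] (G : SimpleGraph V) (hG : G.Connected)
    (s : V) (k : ℕ) (Vc : Fin k → Set V) (hcomp : IsCompFamily G s Vc) (hk : 2 ≤ k)
    (A : Set V) (hA : Resolves G A) :
    ∀ i : Fin k, Resolves (Gi G s (Vc i)) (liftSet (Vc i ∪ {s}) ((A ∩ Vc i) ∪ {s})) := by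
  intro i u v huv
  obtain ⟨u, hu⟩ := u
  obtain ⟨v, hv⟩ := v
  have huv' : u ≠ v := fun h => huv (Subtype.ext h)
  obtain ⟨w, hwA, hw⟩ := hA u v huv'
  have hss : s ∈ Vc i ∪ {s} := Or.inr rfl
  have key : G.dist u s ≠ G.dist v s → ∃ w' ∈ liftSet (Vc i ∪ {s}) ((A ∩ Vc i) ∪ {s}),
      (Gi G s (Vc i)).dist ⟨u, hu⟩ w' ≠ (Gi G s (Vc i)).dist ⟨v, hv⟩ w' := by
    intro hne
    refine ⟨⟨s, hss⟩, Or.inr rfl, ?_⟩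
    rw [dist_eq hG hcomp hu hss, dist_eq hG hcomp hv hss]
    exact hne
  by_cases hwi : w ∈ Vc i
  · refine ⟨⟨w, Or.inl hwi⟩, Or.inl ⟨hwA, hwi⟩, ?_⟩
    rw [dist_eq hG hcomp hu (Or.inl hwi), dist_eq hG hcomp hv (Or.inl hwi)]
    exact hw
  by_cases hws : w = s
  · exact key (hws ▸ hw)
  refine key ?_
  have hu2 := hu
  have hv2 := hv
  rcases hu2 with hu' | hu' <;> rcases hv2 with hv' | hv'
  · have h1 : G.dist u w = G.dist u s + G.dist s w := dist_add hG hcomp hu' hwi hws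
    have h2 : G.dist v w = G.dist v s + G.dist s w := dist_add hG hcomp hv' hwi hws
    exact fun h => hw (by rw [h1, h2, h])
  · simp only [Set.mem_singleton_iff] at hv'
    rw [hv', SimpleGraph.dist_self]
    exact fun h => mem_ne_s hcomp hu' (hG.dist_eq_zero_iff.mp h)
  · simp only [Set.mem_singleton_iff] at hu'
    rw [hu', SimpleGraph.dist_self]
    exact fun h => mem_ne_s hcomp hv' (hG.dist_eq_zero_iff.mp h.symm)
  · simp only [Set.mem_singleton_iff] at hu' hv'
    exact absurd (hu'.trans hv'.symm) huv'
end

section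
/- Let G be a connected graph with separation vertex s and components V₁,...,V_k of G - s (k ≥ 2). If A is a resolving set of G, then there do not exist two distinct indices i ≠ j such that s is an A_i-gate in G_i and s is an A_j-gate in G_j, where A_i := (A ∩ V_i) ∪ {s} and G_i := G[V_i ∪ {s}]. -/
open SimpleGraph

section Stmt11Aux

variable {V : Type*} {G : SimpleGraph V} {s : V} {k : ℕ} {Vc : Fin k → Set V}

lemma walk_lift {S : Set V} :
    ∀ {a b : V} (w : G.Walk a b), (∀ x ∈ w.support, x ∈ S) → ∀ (ha : a ∈ S) (hb : b ∈ S),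
    ∃ w' : (G.induce S).Walk ⟨a, ha⟩ ⟨b, hb⟩, w'.length = w.length := by
  intro a b w
  induction w with
  | nil =>
    intro _ ha hb
    exact ⟨SimpleGraph.Walk.nil, rfl⟩
  | @cons a c b h q ih =>
    intro hw ha hb
    have hc : c ∈ S := hw c (by simp)
    obtain ⟨q', hq'⟩ := ih (fun x hx => hw x (by simp [hx])) hc hb
    have hadj : (G.induce S).Adj ⟨a, ha⟩ ⟨c, hc⟩ := h
    exact ⟨SimpleGraph.Walk.cons hadj q', by simp [hq']⟩

lemma walk_through_s (hcomp : IsCompFamily G s Vc) {i : Fin k} {x a : V}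
    (hx : x ∈ Vc i) (ha : a ∉ Vc i) (has : a ≠ s) (w : G.Walk x a) : s ∈ w.support := by
  by_contra hs
  obtain ⟨m, hm⟩ := (hcomp.2.1 a).1 has
  exact ha ((hcomp.2.2.2.2 i m x hx a hm ⟨w, hs⟩) ▸ hm)

lemma dist_split (hG : G.Connected) {x a : V} (h : ∀ w : G.Walk x a, s ∈ w.support) :
    G.dist x a = G.dist x s + G.dist s a := by
  classical
  refine le_antisymm (hG.dist_triangle) ?_
  obtain ⟨p, hp, hlen⟩ := hG.exists_path_of_dist x a
  have hs := h p
  calc G.dist x s + G.dist s a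
      ≤ (p.takeUntil s hs).length + (p.dropUntil s hs).length :=
        add_le_add (SimpleGraph.dist_le _) (SimpleGraph.dist_le _)
    _ = p.length := by
        rw [← SimpleGraph.Walk.length_append, SimpleGraph.Walk.take_spec]
    _ = G.dist x a := hlen

lemma path_support_subset (hcomp : IsCompFamily G s Vc) {i : Fin k} {x y : V}
    (hx : x ∈ Vc i ∪ {s}) (hy : y ∈ Vc i ∪ {s}) (p : G.Walk x y) (hp : p.IsPath) :
    ∀ z ∈ p.support, z ∈ Vc i ∪ {s} := by
  classical
  intro z hz
  by_contra hzS
  have hzs : z ≠ s := fun h => hzS (h ▸ Set.mem_union_right _ rfl)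
  have hzi : z ∉ Vc i := fun h => hzS (Set.mem_union_left _ h)
  have hs1 : s ∈ (p.takeUntil z hz).support := by
    rcases hx with hx | hx
    · exact walk_through_s hcomp hx hzi hzs _
    · have : x = s := hx
      exact this ▸ (p.takeUntil z hz).start_mem_support
  have hs2 : s ∈ (p.dropUntil z hz).support := by
    rcases hy with hy | hy
    · have h' : s ∈ (p.dropUntil z hz).reverse.support :=
        walk_through_s hcomp hy hzi hzs _
      simpa [SimpleGraph.Walk.support_reverse] using h'
    · have : y = s := hy
      exact this ▸ (p.dropUntil z hz).end_mem_support
  have hnd := hp.support_nodup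
  rw [← SimpleGraph.Walk.take_spec p hz, SimpleGraph.Walk.support_append] at hnd
  have htail : s ∈ (p.dropUntil z hz).support.tail := by
    have hcons := (p.dropUntil z hz).support_eq_cons
    rw [hcons] at hs2
    rcases List.mem_cons.1 hs2 with h | h
    · exact absurd h.symm hzs
    · exact h
  exact (List.disjoint_of_nodup_append hnd) hs1 htail

lemma dist_induce (hG : G.Connected) (hcomp : IsCompFamily G s Vc) (i : Fin k)
    (x y : ↥(Vc i ∪ {s})) :
    (Gi G s (Vc i)).dist x y = G.dist ↑x ↑y := by
  obtain ⟨p, hp, hlen⟩ := hG.exists_path_of_dist ↑x ↑y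
  have hsub := path_support_subset hcomp x.2 y.2 p hp
  obtain ⟨w', hw'⟩ := walk_lift p hsub x.2 y.2
  refine le_antisymm ?_ ?_
  · calc (Gi G s (Vc i)).dist x y ≤ w'.length := SimpleGraph.dist_le w'
      _ = G.dist ↑x ↑y := hw'.trans hlen
  · have hr : (Gi G s (Vc i)).Reachable x y := ⟨w'⟩
    obtain ⟨q, hq⟩ := hr.exists_walk_length_eq_dist
    calc G.dist ↑x ↑y
        ≤ (q.map (SimpleGraph.Embedding.induce (Vc i ∪ {s})).toHom).length :=
          SimpleGraph.dist_le _
      _ = (Gi G s (Vc i)).dist x y := (SimpleGraph.Walk.length_map _ _).trans hq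

lemma exists_point (hG : G.Connected) (u v : V) :
    ∀ n, n ≤ G.dist u v → ∃ x, G.dist u x = n ∧ G.dist x v + n = G.dist u v := by
  intro n
  induction n with
  | zero => intro _; exact ⟨u, by simp, by simp⟩
  | succ n ih =>
    intro hn
    obtain ⟨x, hux, hxv⟩ := ih (Nat.le_of_succ_le hn)
    obtain ⟨p, hp, hlen⟩ := hG.exists_path_of_dist x v
    cases p with
    | nil => simp at hlen; omega
    | @cons _ y _ h q =>
      have hlen' : q.length + 1 = G.dist x v := by simpa using hlen
      have hyv : G.dist y v ≤ q.length := SimpleGraph.dist_le q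
      have hxy : G.dist x y ≤ 1 := by
        have := SimpleGraph.dist_le (SimpleGraph.Walk.cons h SimpleGraph.Walk.nil)
        simpa using this
      have t1 : G.dist u v ≤ G.dist u y + G.dist y v := hG.dist_triangle
      have t2 : G.dist u y ≤ G.dist u x + G.dist x y := hG.dist_triangle
      have t3 : G.dist x v ≤ G.dist x y + G.dist y v := hG.dist_triangle
      exact ⟨y, by omega, by omega⟩

lemma gate_key (hG : G.Connected) (hcomp : IsCompFamily G s Vc) {i : Fin k} {A : Set V}
    (hgate : IsGate (Gi G s (Vc i)) (liftSet (Vc i ∪ {s}) ((A ∩ Vc i) ∪ {s})) (si s (Vc i))) :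
    ∃ u ∈ Vc i, ∀ a ∈ A, G.dist u a = G.dist u s + G.dist s a := by
  obtain ⟨u, hus, hu⟩ := hgate
  have hui : ↑u ∈ Vc i := by
    rcases u.2 with h | h
    · exact h
    · exact absurd (Subtype.ext (Set.mem_singleton_iff.1 h)) hus
  refine ⟨↑u, hui, ?_⟩
  intro a haA
  by_cases hai : a ∈ Vc i ∪ {s}
  · have hmem : (⟨a, hai⟩ : ↥(Vc i ∪ {s})) ∈ liftSet (Vc i ∪ {s}) ((A ∩ Vc i) ∪ {s}) := by
      rcases hai with h | h
      · exact Or.inl ⟨haA, h⟩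
      · exact Or.inr h
    have hgd := hu ⟨a, hai⟩ hmem
    rw [dist_induce hG hcomp, dist_induce hG hcomp, dist_induce hG hcomp] at hgd
    exact hgd
  · have has : a ≠ s := fun h => hai (h ▸ Set.mem_union_right _ rfl)
    have hani : a ∉ Vc i := fun h => hai (Set.mem_union_left _ h)
    exact dist_split hG (fun w => walk_through_s hcomp hui hani has w)

lemma midpt (hG : G.Connected) (hcomp : IsCompFamily G s Vc) {i : Fin k} {A : Set V}
    {u : V} (hui : u ∈ Vc i)
    (hkey : ∀ a ∈ A, G.dist u a = G.dist u s + G.dist s a) {m : ℕ}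
    (hm1 : 1 ≤ m) (hm2 : m ≤ G.dist u s) :
    ∃ x ∈ Vc i, G.dist x s = m ∧ ∀ a ∈ A, G.dist x a = m + G.dist s a := by
  obtain ⟨x, hux, hxs⟩ := exists_point hG u s (G.dist u s - m) (by omega)
  have hxs' : G.dist x s = m := by omega
  have hxi : x ∈ Vc i := by
    by_contra hxn
    have hxs0 : x ≠ s := by
      rintro rfl
      simp at hxs'
      omega
    have hsplit := dist_split hG (fun w => walk_through_s hcomp hui hxn hxs0 w)
    have hcomm : G.dist s x = G.dist x s := SimpleGraph.dist_comm ..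
    omega
  refine ⟨x, hxi, hxs', fun a ha => ?_⟩
  have h1 := hkey a ha
  have t1 : G.dist x a ≤ G.dist x s + G.dist s a := hG.dist_triangle
  have t2 : G.dist u a ≤ G.dist u x + G.dist x a := hG.dist_triangle
  omega

end Stmt11Aux

/-- if `A` resolves `G`, then `s` is an `A_i`-gate in `G_i` for at most one `i`. -/
theorem stmt11 {V : Type*} [Fintype V] (G : SimpleGraph V) (hG : G.Connected)
    (s : V) (k : ℕ) (Vc : Fin k → Set V) (hcomp : IsCompFamily G s Vc) (hk : 2 ≤ k)
    (A : Set V) (hA : Resolves G A) :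
    ∀ i j : Fin k,
      IsGate (Gi G s (Vc i)) (liftSet (Vc i ∪ {s}) ((A ∩ Vc i) ∪ {s})) (si s (Vc i)) →
      IsGate (Gi G s (Vc j)) (liftSet (Vc j ∪ {s}) ((A ∩ Vc j) ∪ {s})) (si s (Vc j)) →
      i = j := by
  intro i j hi hj
  by_contra hij
  obtain ⟨u, hui, hukey⟩ := gate_key hG hcomp hi
  obtain ⟨v, hvj, hvkey⟩ := gate_key hG hcomp hj
  have hus : u ≠ s := (hcomp.2.1 u).2 ⟨i, hui⟩
  have hvs : v ≠ s := (hcomp.2.1 v).2 ⟨j, hvj⟩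
  have hu1 : 1 ≤ G.dist u s := hG.pos_dist_of_ne hus
  have hv1 : 1 ≤ G.dist v s := hG.pos_dist_of_ne hvs
  set m := min (G.dist u s) (G.dist v s) with hm
  obtain ⟨x, hxi, hxs, hxkey⟩ := midpt hG hcomp hui hukey (le_min hu1 hv1) (min_le_left _ _)
  obtain ⟨y, hyj, hys, hykey⟩ := midpt hG hcomp hvj hvkey (le_min hu1 hv1) (min_le_right _ _)
  have hxy : x ≠ y := fun h => hij (hcomp.2.2.1 x i j hxi (h ▸ hyj))
  obtain ⟨a, haA, hd⟩ := hA x y hxy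
  exact hd ((hxkey a haA).trans (hykey a haA).symm)
end

section
/- Let G be a connected graph decomposed via its DEBC-tree with root r (an a-node with at least two children). If h(r) = (α, β) where β is the size of a minimum ν(r)-resolving set for G, then the metric dimension of G equals β − 1. -/
open SimpleGraph

/-- Metric dimension: the least size of a resolving set. -/
noncomputable def metricDim {W : Type*} (G : SimpleGraph W) : ℕ :=
  sInf {m | ∃ A : Set W, Resolves G A ∧ A.ncard = m}

-- key: distance through cut vertex
lemma dist_split_s18 {V : Type*} {G : SimpleGraph V} (hG : G.Connected) {s : V} {k : ℕ}
    {Vc : Fin k → Set V} (hcomp : IsCompFamily G s Vc) {i j : Fin k} (hij : i ≠ j)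
    {x w : V} (hx : x ∈ Vc i) (hw : w ∈ Vc j) :
    G.dist x w = G.dist x s + G.dist s w := by
  classical
  refine le_antisymm (hG.dist_triangle) ?_
  obtain ⟨p, hp⟩ := hG.exists_walk_length_eq_dist x w
  have hs : s ∈ p.support := by
    by_contra h
    exact hij (hcomp.2.2.2.2 i j x hx w hw ⟨p, h⟩)
  have h1 : G.dist x s ≤ (p.takeUntil s hs).length := dist_le _
  have h2 : G.dist s w ≤ (p.dropUntil s hs).length := dist_le _
  have : (p.takeUntil s hs).length + (p.dropUntil s hs).length = p.length := by
    have h := congr_arg Walk.length (p.take_spec hs)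
    rwa [Walk.length_append] at h
  omega

lemma withoutSep {V : Type*} {G : SimpleGraph V} (hG : G.Connected) {s : V} {k : ℕ}
    {Vc : Fin k → Set V} (hcomp : IsCompFamily G s Vc) (hk : 2 ≤ k)
    (hmeet : ∀ R : Set V, Resolves G R → ∀ i : Fin k, (R ∩ Vc i).Nonempty)
    {R : Set V} (hR : Resolves G R) : Resolves G (R \ {s}) := by
  have key : ∀ u v : V, G.dist u s < G.dist v s →
      ∃ w ∈ R \ {s}, G.dist u w < G.dist v w := by
    intro u v hlt
    have hvs : v ≠ s := by
      rintro rfl; simp [SimpleGraph.dist_self] at hlt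
    obtain ⟨j, hvj⟩ := (hcomp.2.1 v).mp hvs
    haveI : Nontrivial (Fin k) := Fin.nontrivial_iff_two_le.mpr hk
    obtain ⟨i, hij⟩ := exists_ne j
    obtain ⟨w, hwR, hwi⟩ := hmeet R hR i
    have hws : w ≠ s := (hcomp.2.1 w).mpr ⟨i, hwi⟩
    refine ⟨w, ⟨hwR, hws⟩, ?_⟩
    have hv : G.dist v w = G.dist v s + G.dist s w :=
      dist_split_s18 hG hcomp (fun h => hij h.symm) hvj hwi
    have hu : G.dist u w ≤ G.dist u s + G.dist s w := hG.dist_triangle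
    omega
  intro u v huv
  obtain ⟨w, hwR, hwd⟩ := hR u v huv
  by_cases hws : w = s
  · subst hws
    rcases (Ne.lt_or_gt hwd) with h | h
    · obtain ⟨w', hw', hlt⟩ := key u v h
      exact ⟨w', hw', hlt.ne⟩
    · obtain ⟨w', hw', hlt⟩ := key v u h
      exact ⟨w', hw', hlt.ne'⟩
  · exact ⟨w, ⟨hwR, hws⟩, hwd⟩

/-- if every resolving set of `G` meets each component at the root cut vertex
`s = ν(r)` and `B` is a minimum `s`-resolving set (so `|B| = β`), then the metric dimension of
`G` is `β - 1`. -/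
theorem stmt18 {V : Type*} [Fintype V] (G : SimpleGraph V) (hG : G.Connected)
    (s : V) (k : ℕ) (Vc : Fin k → Set V) (hcomp : IsCompFamily G s Vc) (hk : 2 ≤ k)
    (hmeet : ∀ R : Set V, Resolves G R → ∀ i : Fin k, (R ∩ Vc i).Nonempty)
    (B : Set V) (hB : IsMinSResolving G s B) :
    metricDim G = B.ncard - 1 := by
  obtain ⟨hBres, hsB, hBmin⟩ := hB
  have hres' : Resolves G (B \ {s}) := withoutSep hG hcomp hk hmeet hBres
  have hcard : (B \ {s}).ncard = B.ncard - 1 :=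
    Set.ncard_diff_singleton_of_mem hsB
  refine le_antisymm (Nat.sInf_le ⟨B \ {s}, hres', hcard⟩) ?_
  refine le_csInf ⟨B.ncard, B, hBres, rfl⟩ ?_
  rintro m ⟨A, hAres, rfl⟩
  have h1 : Resolves G (insert s A) := fun u v huv =>
    (hAres u v huv).imp fun w hw => ⟨Set.mem_insert_of_mem _ hw.1, hw.2⟩
  have h2 : B.ncard ≤ (insert s A).ncard := hBmin _ h1 (Set.mem_insert _ _)
  have h3 : (insert s A).ncard ≤ A.ncard + 1 := Set.ncard_insert_le _ _
  omega
end

section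
/- Let G be a connected graph with a cut vertex s whose removal yields components V₁,...,V_k (k ≥ 2; if k = 2 assume every resolving set meets both parts). For each i let α_i be the size of a minimum non-gate-s-resolving set of G_i := G[V_i ∪ {s}] and β_i the size of a minimum s-resolving set of G_i. Then the size of a minimum non-gate-s-resolving set for G equals (Σ_{i=1}^k α_i) − (k − 1), and the size of a minimum s-resolving set for G equals that quantity if α_i = β_i for all i, and equals it minus 1 otherwise. -/
open SimpleGraph

namespace Stmt19Aux


variable {W : Type*} {G : SimpleGraph W}

lemma exists_adj_dist (hG : G.Connected) {u v : W} (h : u ≠ v) :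
    ∃ z, G.Adj u z ∧ G.dist u v = G.dist z v + 1 := by
  obtain ⟨p, hp⟩ := hG.exists_walk_length_eq_dist u v
  cases p with
  | nil => exact absurd rfl h
  | @cons _ z _ hadj q =>
    refine ⟨z, hadj, ?_⟩
    have h1 : G.dist z v ≤ q.length := G.dist_le q
    have h2 : G.dist u v ≤ G.dist u z + G.dist z v := hG.dist_triangle
    have h3 : G.dist u z ≤ 1 := by
      simpa using G.dist_le (Walk.cons hadj Walk.nil)
    simp only [Walk.length_cons] at hp
    omega

lemma exists_between (hG : G.Connected) :
    ∀ (n : ℕ) (a b : W), G.dist a b = n → ∀ c ≤ n,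
      ∃ z : W, G.dist a z + G.dist z b = n ∧ G.dist z b = c := by
  intro n
  induction n with
  | zero =>
    intro a b h c hc
    exact ⟨b, by simp [h], by rw [SimpleGraph.dist_self]; omega⟩
  | succ m ih =>
    intro a b h c hc
    rcases eq_or_lt_of_le hc with rfl | hlt
    · exact ⟨a, by simp [h], h⟩
    · have hab : a ≠ b := by
        rintro rfl
        rw [SimpleGraph.dist_self] at h
        omega
      obtain ⟨z₁, hadj, hz₁⟩ := exists_adj_dist hG hab
      have hz₁' : G.dist z₁ b = m := by omega
      obtain ⟨z, hz1, hz2⟩ := ih z₁ b hz₁' c (by omega)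
      refine ⟨z, ?_, hz2⟩
      have t1 : G.dist a z ≤ G.dist a z₁ + G.dist z₁ z := hG.dist_triangle
      have t3 : G.dist a z₁ ≤ 1 := by
        simpa using G.dist_le (Walk.cons hadj Walk.nil)
      have t2 : G.dist a b ≤ G.dist a z + G.dist z b := hG.dist_triangle
      omega

lemma exists_pseudo (hG : G.Connected) {R : Set W} {s u' : W}
    (hout : ∀ w ∈ R, G.dist u' w = G.dist u' s + G.dist s w) {c : ℕ} (hc : c ≤ G.dist u' s) :
    ∃ z, G.dist u' z + c = G.dist u' s ∧ G.dist z s = c ∧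
      ∀ w ∈ R, G.dist z w = c + G.dist s w := by
  obtain ⟨z, hz1, hz2⟩ := exists_between hG _ u' s rfl c hc
  refine ⟨z, by omega, hz2, ?_⟩
  intro w hw
  have t1 : G.dist z w ≤ G.dist z s + G.dist s w := hG.dist_triangle
  have t2 : G.dist u' w ≤ G.dist u' z + G.dist z w := hG.dist_triangle
  have h3 := hout w hw
  omega

lemma exists_nonGate_ext [Finite W] (hH : G.Connected)
    {s : W} {B : Set W} (hB : Resolves G B) (hs : s ∈ B) :
    ∃ C : Set W, Resolves G C ∧ s ∈ C ∧ ¬ IsGate G C s ∧ C.ncard ≤ B.ncard + 1 := by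
  by_cases hg : IsGate G B s
  swap
  · exact ⟨B, hB, hs, hg, Nat.le_succ _⟩
  classical
  have hUfin : {u | IsOutVertex G B s u}.Finite := Set.toFinite _
  obtain ⟨u₀, hu₀U, hmax⟩ := Set.exists_max_image {u | IsOutVertex G B s u}
    (fun u => G.dist u s) hUfin hg
  refine ⟨insert u₀ B, ?_, Set.mem_insert_of_mem _ hs, ?_, Set.ncard_insert_le _ _⟩
  · intro u v huv
    obtain ⟨w, hw, h⟩ := hB u v huv
    exact ⟨w, Set.mem_insert_of_mem _ hw, h⟩
  · rintro ⟨v, hvs, hvout⟩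
    have hvB : ∀ w ∈ B, G.dist v w = G.dist v s + G.dist s w :=
      fun w hw => hvout w (Set.mem_insert_of_mem _ hw)
    have hvu₀ : G.dist v u₀ = G.dist v s + G.dist s u₀ := hvout u₀ (Set.mem_insert _ _)
    have hvU : v ∈ {u | IsOutVertex G B s u} := ⟨hvs, hvB⟩
    have hle : G.dist v s ≤ G.dist u₀ s := hmax v hvU
    have hc0 : 0 < G.dist v s := hH.pos_dist_of_ne hvs
    obtain ⟨z, hz0, hz1, hz2⟩ := exists_pseudo hH hu₀U.2 hle
    have hvz : v ≠ z := by
      rintro rfl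
      rw [SimpleGraph.dist_comm (u := u₀) (v := v)] at hz0
      rw [SimpleGraph.dist_comm (u := s) (v := u₀)] at hvu₀
      omega
    obtain ⟨w, hw, hne⟩ := hB v z hvz
    exact hne ((hvB w hw).trans (hz2 w hw).symm)



variable {V : Type*} {G : SimpleGraph V}

/-- Walk into an induced subgraph. -/
def toInduceWalk {S : Set V} : ∀ {x y : V} (p : G.Walk x y)
    (h : ∀ z ∈ p.support, z ∈ S),
    (G.induce S).Walk ⟨x, h x p.start_mem_support⟩ ⟨y, h y p.end_mem_support⟩
  | _, _, Walk.nil, _ => Walk.nil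
  | _, _, Walk.cons ha q, h =>
      Walk.cons (by exact ha)
        (toInduceWalk q (fun z hz => h z (by simp [Walk.support_cons, hz])))

lemma toInduceWalk_length {S : Set V} : ∀ {x y : V} (p : G.Walk x y)
    (h : ∀ z ∈ p.support, z ∈ S), (toInduceWalk p h).length = p.length
  | _, _, Walk.nil, _ => rfl
  | _, _, Walk.cons ha q, h => by
      simp only [toInduceWalk, Walk.length_cons, toInduceWalk_length]
      exact congrArg (· + 1) (toInduceWalk_length q _)

/-- The projection homomorphism from an induced subgraph. -/
def induceHomOut (S : Set V) : G.induce S →g G :=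
  ⟨Subtype.val, fun h => h⟩

section comp

variable {s : V} {k : ℕ} {Vc : Fin k → Set V}

lemma not_mem_comp (hc : IsCompFamily G s Vc) (i : Fin k) : s ∉ Vc i :=
  fun h => ((hc.2.1 s).2 ⟨i, h⟩) rfl

lemma mem_comp_of_ne (hc : IsCompFamily G s Vc) {x : V} (hx : x ≠ s) : ∃ i, x ∈ Vc i :=
  (hc.2.1 x).1 hx

lemma walk_support_subset (hc : IsCompFamily G s Vc) {i : Fin k} {x y : V} (hx : x ∈ Vc i)
    (p : G.Walk x y) (hp : s ∉ p.support) : ∀ z ∈ p.support, z ∈ Vc i := by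
  classical
  intro z hz
  have hzs : z ≠ s := fun h => hp (h ▸ hz)
  obtain ⟨j, hj⟩ := mem_comp_of_ne hc hzs
  have hij : i = j := hc.2.2.2.2 i j x hx z hj
    ⟨p.takeUntil z hz, fun h => hp (p.support_takeUntil_subset hz h)⟩
  exact hij ▸ hj

lemma cross_walk_mem (hc : IsCompFamily G s Vc) {i j : Fin k} (hij : i ≠ j) {x y : V}
    (hx : x ∈ Vc i) (hy : y ∈ Vc j) (p : G.Walk x y) : s ∈ p.support := by
  by_contra h
  exact hij (hc.2.2.2.2 i j x hx y hy ⟨p, h⟩)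

lemma dist_cross (hG : G.Connected) (hc : IsCompFamily G s Vc) {i j : Fin k} (hij : i ≠ j)
    {x y : V} (hx : x ∈ Vc i) (hy : y ∈ Vc j) :
    G.dist x y = G.dist x s + G.dist s y := by
  classical
  refine le_antisymm hG.dist_triangle ?_
  obtain ⟨p, hp⟩ := hG.exists_walk_length_eq_dist x y
  have hs : s ∈ p.support := cross_walk_mem hc hij hx hy p
  have h1 : G.dist x s ≤ (p.takeUntil s hs).length := G.dist_le _
  have h2 : G.dist s y ≤ (p.dropUntil s hs).length := G.dist_le _
  have h3 : (p.takeUntil s hs).length + (p.dropUntil s hs).length = p.length := by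
    have := congrArg Walk.length (p.take_spec hs)
    rwa [Walk.length_append] at this
  omega

/-- The support of any path between vertices of `Vc i ∪ {s}` stays in `Vc i ∪ {s}`. -/
lemma path_support_subset (hc : IsCompFamily G s Vc) {i : Fin k} {x y : V}
    (hx : x ∈ Vc i ∪ {s}) (hy : y ∈ Vc i ∪ {s}) {p : G.Walk x y} (hp : p.IsPath) :
    ∀ z ∈ p.support, z ∈ Vc i ∪ {s} := by
  classical
  intro z hz
  by_cases hzs : z = s
  · exact Or.inr (by simp [hzs])
  obtain ⟨j, hj⟩ := mem_comp_of_ne hc hzs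
  set p1 := p.takeUntil z hz with hp1
  set p2 := p.dropUntil z hz with hp2
  have hcontra : s ∈ p1.support → s ∈ p2.support → False := by
    intro h1 h2
    have hnd2 : (p1.append p2).support.Nodup := by
      rw [hp1, hp2, p.take_spec hz]; exact hp.support_nodup
    rw [Walk.support_append] at hnd2
    have h2t : s ∈ p2.support.tail := by
      have := p2.support_eq_cons
      rw [this] at h2
      rcases List.mem_cons.mp h2 with h | h
      · exact absurd h.symm hzs
      · exact h
    exact (List.nodup_append'.mp hnd2).2.2 h1 h2t
  by_cases h1 : s ∈ p1.support
  · by_cases h2 : s ∈ p2.support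
    · exact absurd h2 (fun h => hcontra h1 h)
    · have hy' : y ∈ Vc i := by
        rcases hy with h | h
        · exact h
        · exfalso; have hys : y = s := h; subst hys; exact h2 p2.end_mem_support
      have hji : j = i := hc.2.2.2.2 j i z hj y hy' ⟨p2, h2⟩
      exact Or.inl (hji ▸ hj)
  · have hx' : x ∈ Vc i := by
      rcases hx with h | h
      · exact h
      · exfalso; have hxs : x = s := h; subst hxs; exact h1 p1.start_mem_support
    have hij : i = j := hc.2.2.2.2 i j x hx' z hj ⟨p1, h1⟩
    exact Or.inl (hij ▸ hj)

lemma gi_reachable (hG : G.Connected) (hc : IsCompFamily G s Vc) {i : Fin k}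
    (x y : ↥(Vc i ∪ {s})) : (Gi G s (Vc i)).Reachable x y := by
  obtain ⟨p, hp, -⟩ := hG.exists_path_of_dist ↑x ↑y
  exact ⟨toInduceWalk p (path_support_subset hc x.2 y.2 hp)⟩

lemma gi_connected (hG : G.Connected) (hc : IsCompFamily G s Vc) {i : Fin k} :
    (Gi G s (Vc i)).Connected := by
  have : Nonempty ↥(Vc i ∪ {s}) := ⟨si s (Vc i)⟩
  exact SimpleGraph.Connected.mk (fun x y => gi_reachable hG hc x y)

lemma dist_induce (hG : G.Connected) (hc : IsCompFamily G s Vc) {i : Fin k}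
    (x y : ↥(Vc i ∪ {s})) : (Gi G s (Vc i)).dist x y = G.dist ↑x ↑y := by
  refine le_antisymm ?_ ?_
  · obtain ⟨p, hp, hlen⟩ := hG.exists_path_of_dist ↑x ↑y
    calc (Gi G s (Vc i)).dist x y
        ≤ (toInduceWalk p (path_support_subset hc x.2 y.2 hp)).length := SimpleGraph.dist_le _
    _ = p.length := toInduceWalk_length _ _
    _ = G.dist ↑x ↑y := hlen
  · obtain ⟨r, hr⟩ := (gi_reachable hG hc x y).exists_walk_length_eq_dist
    calc G.dist ↑x ↑y ≤ (r.map (induceHomOut _)).length := SimpleGraph.dist_le _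
    _ = r.length := Walk.length_map _ r
    _ = (Gi G s (Vc i)).dist x y := hr


/-- The trace of `R` on component `i`, together with `s`. -/
def RiSet (s : V) (Vc : Fin k → Set V) (R : Set V) (i : Fin k) : Set ↥(Vc i ∪ {s}) :=
  liftSet (Vc i ∪ {s}) ((R ∩ Vc i) ∪ {s})

lemma mem_RiSet {R : Set V} {i : Fin k} {x : ↥(Vc i ∪ {s})} :
    x ∈ RiSet s Vc R i ↔ ((x : V) ∈ R ∧ (x : V) ∈ Vc i) ∨ (x : V) = s := by
  change (x : V) ∈ (R ∩ Vc i) ∪ {s} ↔ _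
  simp only [Set.mem_union, Set.mem_inter_iff, Set.mem_singleton_iff]

lemma si_mem_RiSet {R : Set V} {i : Fin k} : si s (Vc i) ∈ RiSet s Vc R i :=
  mem_RiSet.2 (Or.inr rfl)

lemma dist_through (hG : G.Connected) (hc : IsCompFamily G s Vc) {i j : Fin k} (hji : j ≠ i)
    {z w : V} (hz : z ∈ Vc i ∪ {s}) (hw : w ∈ Vc j) :
    G.dist z w = G.dist z s + G.dist s w := by
  rcases hz with h | h
  · exact dist_cross hG hc hji.symm h hw
  · have hzs : z = s := h
    subst hzs
    rw [SimpleGraph.dist_self, Nat.zero_add]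

lemma resolves_component (hG : G.Connected) (hc : IsCompFamily G s Vc) {R : Set V}
    (hR : Resolves G R) (i : Fin k) :
    Resolves (Gi G s (Vc i)) (RiSet s Vc R i) := by
  intro u v huv
  have hne : (↑u : V) ≠ ↑v := fun h => huv (Subtype.ext h)
  obtain ⟨w, hw, hd⟩ := hR ↑u ↑v hne
  rcases eq_or_ne w s with hws | hwsne
  · rw [hws] at hw hd
    refine ⟨si s (Vc i), si_mem_RiSet, ?_⟩
    rw [dist_induce hG hc, dist_induce hG hc]
    exact hd
  · obtain ⟨j, hj⟩ := mem_comp_of_ne hc hwsne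
    rcases eq_or_ne j i with rfl | hji
    · refine ⟨⟨w, Or.inl hj⟩, mem_RiSet.2 (Or.inl ⟨hw, hj⟩), ?_⟩
      rw [dist_induce hG hc, dist_induce hG hc]
      exact hd
    · have h1 := dist_through hG hc hji u.2 hj
      have h2 := dist_through hG hc hji v.2 hj
      refine ⟨si s (Vc i), si_mem_RiSet, ?_⟩
      rw [dist_induce hG hc, dist_induce hG hc]
      show G.dist ↑u s ≠ G.dist ↑v s
      omega

lemma outvertex_lift (hG : G.Connected) (hc : IsCompFamily G s Vc) {R : Set V} {i : Fin k}
    {u : ↥(Vc i ∪ {s})}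
    (h : IsOutVertex (Gi G s (Vc i)) (RiSet s Vc R i) (si s (Vc i)) u) :
    IsOutVertex G R s ↑u := by
  obtain ⟨hne, hall⟩ := h
  have hnes : (↑u : V) ≠ s := fun hh => hne (Subtype.ext hh)
  have hui : (↑u : V) ∈ Vc i := by
    rcases u.2 with h' | h'
    · exact h'
    · exact absurd h' hnes
  refine ⟨hnes, fun w hw => ?_⟩
  rcases eq_or_ne w s with hws | hwsne
  · rw [hws, SimpleGraph.dist_self, Nat.add_zero]
  · obtain ⟨j, hj⟩ := mem_comp_of_ne hc hwsne
    rcases eq_or_ne j i with rfl | hji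
    · have := hall ⟨w, Or.inl hj⟩ (mem_RiSet.2 (Or.inl ⟨hw, hj⟩))
      rw [dist_induce hG hc, dist_induce hG hc, dist_induce hG hc] at this
      exact this
    · exact dist_through hG hc hji u.2 hj

lemma nongate_lift (hG : G.Connected) (hc : IsCompFamily G s Vc) {R : Set V} {i : Fin k}
    (h : ¬ IsGate G R s) : ¬ IsGate (Gi G s (Vc i)) (RiSet s Vc R i) (si s (Vc i)) :=
  fun ⟨u, hu⟩ => h ⟨↑u, outvertex_lift hG hc hu⟩

lemma no_two_gates_aux (hG : G.Connected) (hc : IsCompFamily G s Vc) {R : Set V}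
    (hR : Resolves G R) {i j : Fin k} (hij : i ≠ j) {u u' : V} (hu : u ∈ Vc i)
    (hu' : u' ∈ Vc j) (hou : IsOutVertex G R s u) (hou' : IsOutVertex G R s u')
    (hle : G.dist u s ≤ G.dist u' s) : False := by
  obtain ⟨z, hz0, hz1, hz2⟩ := exists_pseudo hG hou'.2 hle
  have hdcross : G.dist u' u = G.dist u' s + G.dist s u := dist_cross hG hc hij.symm hu' hu
  have hzpos : 0 < G.dist u s := hG.pos_dist_of_ne hou.1
  have huz : u ≠ z := by
    rintro rfl
    rw [SimpleGraph.dist_comm (u := s) (v := u)] at hdcross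
    omega
  obtain ⟨w, hw, hnew⟩ := hR u z huz
  exact hnew ((hou.2 w hw).trans (hz2 w hw).symm)

lemma no_two_gates (hG : G.Connected) (hc : IsCompFamily G s Vc) {R : Set V}
    (hR : Resolves G R) {i j : Fin k} (hij : i ≠ j) {u u' : V} (hu : u ∈ Vc i)
    (hu' : u' ∈ Vc j) (hou : IsOutVertex G R s u) (hou' : IsOutVertex G R s u') : False := by
  rcases le_total (G.dist u s) (G.dist u' s) with h | h
  · exact no_two_gates_aux hG hc hR hij hu hu' hou hou' h
  · exact no_two_gates_aux hG hc hR hij.symm hu' hu hou' hou h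

/-! ### Counting lemmas -/

lemma ncard_liftSet {S A : Set V} (h : A ⊆ S) : (liftSet S A).ncard = A.ncard := by
  have himg : Subtype.val '' (liftSet S A) = A := by
    ext x
    constructor
    · rintro ⟨y, hy, rfl⟩; exact hy
    · intro hx; exact ⟨⟨x, h hx⟩, hx, rfl⟩
  rw [← Set.ncard_image_of_injective (liftSet S A) Subtype.val_injective, himg]

lemma liftSet_image {S : Set V} (B : Set ↥S) : liftSet S (Subtype.val '' B) = B := by
  ext x
  exact Subtype.val_injective.mem_set_image

lemma ncard_RiSet [Fintype V] (hc : IsCompFamily G s Vc) (R : Set V) (i : Fin k) :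
    (RiSet s Vc R i).ncard = (R ∩ Vc i).ncard + 1 := by
  rw [RiSet, ncard_liftSet (Set.union_subset_union Set.inter_subset_right subset_rfl),
    Set.union_singleton,
    Set.ncard_insert_of_notMem (fun h => not_mem_comp hc i h.2) (Set.toFinite _)]

lemma ncard_biUnion [Fintype V] {ι : Type*} [DecidableEq ι] (t : Finset ι) (f : ι → Set V)
    (hdisj : ∀ i ∈ t, ∀ j ∈ t, i ≠ j → Disjoint (f i) (f j)) :
    (⋃ i ∈ t, f i).ncard = ∑ i ∈ t, (f i).ncard := by
  classical
  induction t using Finset.induction_on with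
  | empty => simp
  | @insert a t ha ih =>
    rw [Finset.set_biUnion_insert, Finset.sum_insert ha,
      ← ih (fun i hi j hj hij =>
        hdisj i (Finset.mem_insert_of_mem hi) j (Finset.mem_insert_of_mem hj) hij)]
    refine Set.ncard_union_eq ?_ (Set.toFinite _) (Set.toFinite _)
    simp only [Set.disjoint_iUnion_right]
    intro i hi
    exact hdisj a (Finset.mem_insert_self _ _) i (Finset.mem_insert_of_mem hi)
      (fun h => ha (h ▸ hi))

lemma ncard_decompose [Fintype V] (hc : IsCompFamily G s Vc) {R : Set V} (hs : s ∈ R) :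
    R.ncard = 1 + ∑ i, (R ∩ Vc i).ncard := by
  classical
  have hR : R = {s} ∪ ⋃ i ∈ (Finset.univ : Finset (Fin k)), (R ∩ Vc i) := by
    ext x
    constructor
    · intro hx
      rcases eq_or_ne x s with rfl | hxs
      · exact Set.mem_union_left _ rfl
      · obtain ⟨i, hi⟩ := mem_comp_of_ne hc hxs
        exact Set.mem_union_right _ (Set.mem_biUnion (Finset.mem_univ i) ⟨hx, hi⟩)
    · intro hx
      rcases hx with h | h
      · exact (Set.mem_singleton_iff.mp h) ▸ hs
      · obtain ⟨i, -, hx1, -⟩ := Set.mem_iUnion₂.mp h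
        exact hx1
  conv_lhs => rw [hR]
  rw [Set.ncard_union_eq ?_ (Set.toFinite _) (Set.toFinite _),
    ncard_biUnion _ _ (fun i _ j _ hij => Set.disjoint_left.mpr
      (fun x hx hx' => hij (hc.2.2.1 x i j hx.2 hx'.2)))]
  · rw [Set.ncard_singleton]
  · refine Set.disjoint_left.mpr ?_
    rintro x rfl hx
    simp only [Set.mem_iUnion] at hx
    obtain ⟨i, _, hi⟩ := hx
    exact not_mem_comp hc i hi.2

lemma union_inter_comp (hc : IsCompFamily G s Vc) {A' : Fin k → Set V}
    (hsub : ∀ i, A' i ⊆ Vc i ∪ {s}) (i : Fin k) :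
    (⋃ j, A' j) ∩ Vc i = A' i \ {s} := by
  ext x
  constructor
  · rintro ⟨hx1, hx2⟩
    simp only [Set.mem_iUnion] at hx1
    obtain ⟨j, hj⟩ := hx1
    have hxs : x ≠ s := fun h => not_mem_comp hc i (h ▸ hx2)
    have hxj : x ∈ Vc j := by
      rcases hsub j hj with h | h
      · exact h
      · exact absurd h hxs
    have : j = i := hc.2.2.1 x j i hxj hx2
    exact ⟨this ▸ hj, hxs⟩
  · rintro ⟨hx1, hx2⟩
    have hxi : x ∈ Vc i := by
      rcases hsub i hx1 with h | h
      · exact h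
      · exact absurd h hx2
    exact ⟨Set.mem_iUnion.2 ⟨i, hx1⟩, hxi⟩

lemma ncard_union_construction [Fintype V] (hc : IsCompFamily G s Vc) (hk0 : 0 < k)
    {A' : Fin k → Set V} (hsub : ∀ i, A' i ⊆ Vc i ∪ {s}) (hsmem : ∀ i, s ∈ A' i) :
    s ∈ ⋃ i, A' i ∧ (⋃ i, A' i).ncard = 1 + ∑ i, ((A' i).ncard - 1) := by
  have hsmem' : s ∈ ⋃ i, A' i := Set.mem_iUnion.2 ⟨⟨0, hk0⟩, hsmem ⟨0, hk0⟩⟩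
  refine ⟨hsmem', ?_⟩
  rw [ncard_decompose hc hsmem']
  congr 1
  refine Finset.sum_congr rfl (fun i _ => ?_)
  rw [union_inter_comp hc hsub i,
    Set.ncard_diff_singleton_of_mem (hsmem i)]


/-! ### Constructions of resolving sets from component data -/

lemma construction_resolves (hG : G.Connected) (hc : IsCompFamily G s Vc)
    {A' : Fin k → Set V} (i₀ : Fin k)
    (hsub : ∀ i, A' i ⊆ Vc i ∪ {s}) (hsmem : ∀ i, s ∈ A' i)
    (hres : ∀ i, Resolves (Gi G s (Vc i)) (liftSet (Vc i ∪ {s}) (A' i)))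
    (hng : ∀ i, i ≠ i₀ → ¬ IsGate (Gi G s (Vc i)) (liftSet (Vc i ∪ {s}) (A' i)) (si s (Vc i))) :
    Resolves G (⋃ i, A' i) := by
  have hsU : s ∈ ⋃ i, A' i := Set.mem_iUnion.2 ⟨i₀, hsmem i₀⟩
  have main : ∀ (i j : Fin k) (u v : V), u ∈ Vc i → v ∈ Vc j → i ≠ j → i ≠ i₀ →
      G.dist u s = G.dist v s → ∃ w ∈ ⋃ l, A' l, G.dist u w ≠ G.dist v w := by
    intro i j u v hu hv hij hii₀ hds
    have hus : u ≠ s := fun h => not_mem_comp hc i (h ▸ hu)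
    have huvert : (⟨u, Or.inl hu⟩ : ↥(Vc i ∪ {s})) ≠ si s (Vc i) :=
      fun h => hus (congrArg Subtype.val h)
    have h1 : ¬ ∀ w ∈ liftSet (Vc i ∪ {s}) (A' i),
        (Gi G s (Vc i)).dist ⟨u, Or.inl hu⟩ w =
        (Gi G s (Vc i)).dist ⟨u, Or.inl hu⟩ (si s (Vc i)) +
          (Gi G s (Vc i)).dist (si s (Vc i)) w :=
      fun hall => hng i hii₀ ⟨_, huvert, hall⟩
    push_neg at h1
    obtain ⟨w, hwA, hwne⟩ := h1
    rw [dist_induce hG hc, dist_induce hG hc, dist_induce hG hc] at hwne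
    have hwne' : G.dist u ↑w ≠ G.dist u s + G.dist s ↑w := hwne
    have hws : (↑w : V) ≠ s := by
      intro h
      rw [h] at hwne'
      exact hwne' (by rw [SimpleGraph.dist_self, Nat.add_zero])
    have hwVci : (↑w : V) ∈ Vc i := by
      rcases w.2 with h | h
      · exact h
      · exact absurd h hws
    have htri : G.dist u ↑w ≤ G.dist u s + G.dist s ↑w := hG.dist_triangle
    have hvw : G.dist v ↑w = G.dist v s + G.dist s ↑w :=
      dist_cross hG hc hij.symm hv hwVci
    refine ⟨↑w, Set.mem_iUnion.2 ⟨i, hwA⟩, ?_⟩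
    omega
  intro u v huv
  rcases eq_or_ne u s with hus | hus
  · refine ⟨s, hsU, ?_⟩
    rw [hus, SimpleGraph.dist_self]
    exact (hG.pos_dist_of_ne (fun h : v = s => huv (hus.trans h.symm))).ne
  rcases eq_or_ne v s with hvs | hvs
  · refine ⟨s, hsU, ?_⟩
    rw [hvs, SimpleGraph.dist_self]
    exact (hG.pos_dist_of_ne hus).ne'
  obtain ⟨i, hi⟩ := mem_comp_of_ne hc hus
  obtain ⟨j, hj⟩ := mem_comp_of_ne hc hvs
  rcases eq_or_ne i j with rfl | hij
  · have hne' : (⟨u, Or.inl hi⟩ : ↥(Vc i ∪ {s})) ≠ ⟨v, Or.inl hj⟩ :=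
      fun h => huv (congrArg Subtype.val h)
    obtain ⟨w, hwA, hwne⟩ := hres i _ _ hne'
    rw [dist_induce hG hc, dist_induce hG hc] at hwne
    exact ⟨↑w, Set.mem_iUnion.2 ⟨i, hwA⟩, hwne⟩
  · by_cases hds : G.dist u s = G.dist v s
    · rcases eq_or_ne i i₀ with rfl | hii₀
      · obtain ⟨w, hw1, hw2⟩ := main j i v u hj hi hij.symm hij.symm hds.symm
        exact ⟨w, hw1, hw2.symm⟩
      · exact main i j u v hi hj hij hii₀ hds
    · exact ⟨s, hsU, hds⟩

lemma construction_nongate (hG : G.Connected) (hc : IsCompFamily G s Vc)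
    {A' : Fin k → Set V}
    (hng : ∀ i, ¬ IsGate (Gi G s (Vc i)) (liftSet (Vc i ∪ {s}) (A' i)) (si s (Vc i))) :
    ¬ IsGate G (⋃ i, A' i) s := by
  rintro ⟨u, hus, hall⟩
  obtain ⟨i, hi⟩ := mem_comp_of_ne hc hus
  have huvert : (⟨u, Or.inl hi⟩ : ↥(Vc i ∪ {s})) ≠ si s (Vc i) :=
    fun h => hus (congrArg Subtype.val h)
  refine hng i ⟨⟨u, Or.inl hi⟩, huvert, ?_⟩
  intro w hwA
  rw [dist_induce hG hc, dist_induce hG hc, dist_induce hG hc]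
  exact hall ↑w (Set.mem_iUnion.2 ⟨i, hwA⟩)

end comp
end Stmt19Aux

/-- with `α_i`/`β_i` the minimum sizes of non-gate-`s`-resolving and
`s`-resolving sets of `G_i`, the minimum non-gate-`s`-resolving set of `G` has size
`(Σ α_i) - (k - 1)`, and the minimum `s`-resolving set of `G` has that size if `α_i = β_i`
for all `i`, and one less otherwise. -/
theorem stmt19 {V : Type*} [Fintype V] (G : SimpleGraph V) (hG : G.Connected)
    (s : V) (k : ℕ) (Vc : Fin k → Set V) (hcomp : IsCompFamily G s Vc) (hk : 2 ≤ k)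
    (hk2 : k = 2 → ∀ R : Set V, Resolves G R → ∀ i : Fin k, (R ∩ Vc i).Nonempty)
    (α β : Fin k → ℕ)
    (hα : ∀ i, ∃ A : Set ↥(Vc i ∪ {s}),
      IsMinNonGateSResolving (Gi G s (Vc i)) (si s (Vc i)) A ∧ A.ncard = α i)
    (hβ : ∀ i, ∃ B : Set ↥(Vc i ∪ {s}),
      IsMinSResolving (Gi G s (Vc i)) (si s (Vc i)) B ∧ B.ncard = β i) :
    (∀ A : Set V, IsMinNonGateSResolving G s A →
        A.ncard = (∑ i, α i) - (k - 1)) ∧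
    (∀ B : Set V, IsMinSResolving G s B →
        B.ncard = if ∀ i, α i = β i then (∑ i, α i) - (k - 1)
                  else (∑ i, α i) - (k - 1) - 1) := by
  classical
  open Stmt19Aux in
  have hk0 : 0 < k := by omega
  set i0 : Fin k := ⟨0, hk0⟩ with hi0
  choose A hA using hα
  choose B hB using hβ
  set T : ℕ := ∑ i, (α i - 1) with hT
  have hα1 : ∀ i, 1 ≤ α i := by
    intro i
    rw [← (hA i).2]
    exact (Set.ncard_pos (Set.toFinite _)).2 ⟨_, (hA i).1.2.1⟩
  have hβ1 : ∀ i, 1 ≤ β i := by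
    intro i
    rw [← (hB i).2]
    exact (Set.ncard_pos (Set.toFinite _)).2 ⟨_, (hB i).1.2.1⟩
  have hsumk : ∑ i, α i = T + k := by
    have h1 : ∀ i ∈ Finset.univ, α i = (α i - 1) + 1 := fun i _ => by
      have := hα1 i; omega
    rw [Finset.sum_congr rfl h1, Finset.sum_add_distrib, hT]
    simp [Fintype.card_fin]
  have harith : (∑ i, α i) - (k - 1) = T + 1 := by omega
  -- the α-bound on components without a gate
  have hbound_ng : ∀ R : Set V, Resolves G R → ∀ i : Fin k,
      ¬ IsGate (Gi G s (Vc i)) (RiSet s Vc R i) (si s (Vc i)) →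
      α i - 1 ≤ (R ∩ Vc i).ncard := by
    intro R hres i hgi
    have h3 := (hA i).1.2.2.2 _ (resolves_component hG hcomp hres i) si_mem_RiSet hgi
    rw [ncard_RiSet hcomp R i, (hA i).2] at h3
    omega
  -- lower bound for non-gate s-resolving sets
  have lowerA : ∀ R : Set V, Resolves G R → s ∈ R → ¬ IsGate G R s → T + 1 ≤ R.ncard := by
    intro R hres hsR hng
    have hcount := ncard_decompose hcomp hsR
    have hst : T ≤ ∑ i, (R ∩ Vc i).ncard :=
      Finset.sum_le_sum fun i _ => hbound_ng R hres i (nongate_lift hG hcomp hng)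
    omega
  -- lower bound for s-resolving sets when α = β
  have lowerB1 : (∀ i, α i = β i) → ∀ R : Set V, Resolves G R → s ∈ R → T + 1 ≤ R.ncard := by
    intro hall R hres hsR
    have hcount := ncard_decompose hcomp hsR
    have hst : T ≤ ∑ i, (R ∩ Vc i).ncard := by
      refine Finset.sum_le_sum fun i _ => ?_
      have h3 := (hB i).1.2.2 _ (resolves_component hG hcomp hres i) si_mem_RiSet
      rw [ncard_RiSet hcomp R i, (hB i).2] at h3
      have := hall i
      omega
    omega
  -- α ≤ β + 1
  have hαβ : ∀ i, α i ≤ β i + 1 := by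
    intro i
    obtain ⟨C, hCres, hCs, hCng, hCcard⟩ :=
      exists_nonGate_ext (gi_connected hG hcomp) (hB i).1.1 (hB i).1.2.1
    have h1 := (hA i).1.2.2.2 C hCres hCs hCng
    rw [(hA i).2] at h1
    rw [(hB i).2] at hCcard
    omega
  -- general lower bound for s-resolving sets
  have lowerB : ∀ R : Set V, Resolves G R → s ∈ R → T ≤ R.ncard := by
    intro R hres hsR
    have hcount := ncard_decompose hcomp hsR
    by_cases hJ : ∃ j, IsGate (Gi G s (Vc j)) (RiSet s Vc R j) (si s (Vc j))
    · obtain ⟨j, hgj⟩ := hJ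
      have hβbound : β j ≤ (R ∩ Vc j).ncard + 1 := by
        have h3 := (hB j).1.2.2 _ (resolves_component hG hcomp hres j) si_mem_RiSet
        rw [ncard_RiSet hcomp R j, (hB j).2] at h3
        omega
      have hothers : ∀ i, i ≠ j → α i - 1 ≤ (R ∩ Vc i).ncard := by
        intro i hij
        refine hbound_ng R hres i ?_
        rintro ⟨u, hu⟩
        obtain ⟨u', hu'⟩ := hgj
        have hou := outvertex_lift hG hcomp hu
        have hou' := outvertex_lift hG hcomp hu'
        have hui : (↑u : V) ∈ Vc i := by
          rcases u.2 with h | h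
          · exact h
          · exact absurd h (fun hh => hu.1 (Subtype.ext hh))
        have hui' : (↑u' : V) ∈ Vc j := by
          rcases u'.2 with h | h
          · exact h
          · exact absurd h (fun hh => hu'.1 (Subtype.ext hh))
        exact no_two_gates hG hcomp hres hij hui hui' hou hou'
      have hj1 : α j - 1 ≤ (R ∩ Vc j).ncard + 1 := by
        have := hαβ j; omega
      have e1 : ∑ i, (R ∩ Vc i).ncard
          = (R ∩ Vc j).ncard + ∑ i ∈ Finset.univ.erase j, (R ∩ Vc i).ncard :=
        (Finset.add_sum_erase _ _ (Finset.mem_univ j)).symm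
      have e2 : T = (α j - 1) + ∑ i ∈ Finset.univ.erase j, (α i - 1) := by
        rw [hT, ← Finset.add_sum_erase _ _ (Finset.mem_univ j)]
      have e3 : ∑ i ∈ Finset.univ.erase j, (α i - 1)
          ≤ ∑ i ∈ Finset.univ.erase j, (R ∩ Vc i).ncard :=
        Finset.sum_le_sum fun i hi => hothers i (Finset.mem_erase.1 hi).1
      omega
    · push_neg at hJ
      have hst : T ≤ ∑ i, (R ∩ Vc i).ncard :=
        Finset.sum_le_sum fun i _ => hbound_ng R hres i (hJ i)
      omega
  -- construction from the A i
  set A' : Fin k → Set V := fun i => Subtype.val '' (A i) with hA'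
  have hA'sub : ∀ i, A' i ⊆ Vc i ∪ {s} := fun i => Subtype.coe_image_subset _ _
  have hA'smem : ∀ i, s ∈ A' i := fun i => ⟨si s (Vc i), (hA i).1.2.1, rfl⟩
  have hA'lift : ∀ i, liftSet (Vc i ∪ {s}) (A' i) = A i := fun i => liftSet_image (A i)
  have hA'res : ∀ i, Resolves (Gi G s (Vc i)) (liftSet (Vc i ∪ {s}) (A' i)) := by
    intro i; rw [hA'lift i]; exact (hA i).1.1
  have hA'ng : ∀ i, ¬ IsGate (Gi G s (Vc i)) (liftSet (Vc i ∪ {s}) (A' i)) (si s (Vc i)) := by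
    intro i; rw [hA'lift i]; exact (hA i).1.2.2.1
  have hA'card : ∀ i, (A' i).ncard = α i := by
    intro i
    rw [hA', Set.ncard_image_of_injective _ Subtype.val_injective, (hA i).2]
  have hconsA : Resolves G (⋃ i, A' i) :=
    construction_resolves hG hcomp i0 hA'sub hA'smem hA'res (fun i _ => hA'ng i)
  obtain ⟨hsUA, hcardA⟩ := ncard_union_construction hcomp hk0 hA'sub hA'smem
  have hngA : ¬ IsGate G (⋃ i, A' i) s := construction_nongate hG hcomp hA'ng
  have hcardA' : (⋃ i, A' i).ncard = T + 1 := by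
    rw [hcardA, hT, Finset.sum_congr rfl (fun i _ => by rw [hA'card i])]
    omega
  constructor
  · intro Aset hAset
    obtain ⟨hres, hsmem, hng, hmin⟩ := hAset
    have h1 := hmin _ hconsA hsUA hngA
    have h2 := lowerA Aset hres hsmem hng
    omega
  · intro Bset hBset
    obtain ⟨hres, hsmem, hmin⟩ := hBset
    by_cases hall : ∀ i, α i = β i
    · rw [if_pos hall]
      have h1 := hmin _ hconsA hsUA
      have h2 := lowerB1 hall Bset hres hsmem
      omega
    · rw [if_neg hall]
      push_neg at hall
      obtain ⟨j₀, hne0⟩ := hall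
      set A'' : Fin k → Set V := fun i => if i = j₀ then Subtype.val '' (B j₀) else A' i
        with hA''
      have hA''sub : ∀ i, A'' i ⊆ Vc i ∪ {s} := by
        intro i
        by_cases h : i = j₀
        · subst h
          simp only [hA'', if_pos rfl]
          exact Subtype.coe_image_subset _ _
        · simp only [hA'', if_neg h]
          exact hA'sub i
      have hA''smem : ∀ i, s ∈ A'' i := by
        intro i
        by_cases h : i = j₀
        · subst h
          simp only [hA'', if_pos rfl]
          exact ⟨si s (Vc _), (hB _).1.2.1, rfl⟩
        · simp only [hA'', if_neg h]
          exact hA'smem i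
      have hA''res : ∀ i, Resolves (Gi G s (Vc i)) (liftSet (Vc i ∪ {s}) (A'' i)) := by
        intro i
        by_cases h : i = j₀
        · subst h
          simp only [hA'', if_pos rfl]
          rw [liftSet_image]
          exact (hB _).1.1
        · simp only [hA'', if_neg h]
          exact hA'res i
      have hA''ng : ∀ i, i ≠ j₀ →
          ¬ IsGate (Gi G s (Vc i)) (liftSet (Vc i ∪ {s}) (A'' i)) (si s (Vc i)) := by
        intro i h
        simp only [hA'', if_neg h]
        exact hA'ng i
      have hcons := construction_resolves hG hcomp j₀ hA''sub hA''smem hA''res hA''ng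
      obtain ⟨hsU'', hcard''⟩ := ncard_union_construction hcomp hk0 hA''sub hA''smem
      have hβα : β j₀ + 1 ≤ α j₀ := by
        have h1 := (hB j₀).1.2.2 (A j₀) (hA j₀).1.1 (hA j₀).1.2.1
        rw [(hB j₀).2, (hA j₀).2] at h1
        omega
      have hterm : ∀ i, i ≠ j₀ → (A'' i).ncard = α i := by
        intro i h
        simp only [hA'', if_neg h]
        exact hA'card i
      have htermj : (A'' j₀).ncard = β j₀ := by
        simp only [hA'', if_pos rfl]
        rw [Set.ncard_image_of_injective _ Subtype.val_injective, (hB _).2]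
      have hcard2 : (⋃ i, A'' i).ncard ≤ T := by
        rw [hcard'']
        have e1 : ∑ i, ((A'' i).ncard - 1)
            = (β j₀ - 1) + ∑ i ∈ Finset.univ.erase j₀, (α i - 1) := by
          rw [← Finset.add_sum_erase _ _ (Finset.mem_univ j₀)]
          congr 1
          · rw [htermj]
          · refine Finset.sum_congr rfl fun i hi => ?_
            rw [hterm i (Finset.mem_erase.1 hi).1]
        have e2 : T = (α j₀ - 1) + ∑ i ∈ Finset.univ.erase j₀, (α i - 1) := by
          rw [hT, ← Finset.add_sum_erase _ _ (Finset.mem_univ j₀)]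
        have hb1 := hβ1 j₀
        omega
      have h1 := hmin _ hcons hsU''
      have h2 := lowerB Bset hres hsmem
      omega
end
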